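/- arXiv:2306.07732 — 7 statements merged into one kernel-verified Lean document; each statement's English description precedes it below -/
import Mathlib

section
/- Let p ∈ (0,1) and let v : ℝ → ℝ be a differentiable function with v'(ρ) ≥ b > 0 for all ρ ∈ ℝ. Then (1/√(2π)) ∫_ℝ e^{-ρ²/2} |v(ρ)|^{-p} dρ ≤ C(p) b^{-p}, where C(p) depends only on p. -/
open Real MeasureTheory Set

/-- If p ∈ (0,1), there is C = C(p) such that for every differentiable v : ℝ → ℝ with
v' ≥ b > 0 everywhere, (1/√(2π)) ∫ e^{-ρ²/2} |v(ρ)|^{-p} dρ ≤ C b^{-p}. -/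
theorem stmt2 (p : ℝ) (hp0 : 0 < p) (hp1 : p < 1) :
    ∃ C : ℝ, 0 < C ∧ ∀ (v : ℝ → ℝ) (b : ℝ), 0 < b → Differentiable ℝ v →
      (∀ ρ : ℝ, b ≤ deriv v ρ) →
      (1 / Real.sqrt (2 * π)) * ∫ ρ : ℝ, Real.exp (-ρ ^ 2 / 2) * |v ρ| ^ (-p) ≤ C * b ^ (-p) := by
  have hπ : (0:ℝ) < 2 * π := by positivity
  have hsqrt : 0 < Real.sqrt (2 * π) := Real.sqrt_pos.mpr hπ
  have h1p : (0:ℝ) < 1 - p := by linarith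
  set C₀ : ℝ := 2 / (1 - p) + Real.sqrt (2 * π) with hC₀
  have hC₀pos : 0 < C₀ := by positivity
  refine ⟨C₀ / Real.sqrt (2 * π), by positivity, ?_⟩
  intro v b hb hv hv'
  -- gaussian facts
  have hgint : Integrable (fun ρ : ℝ => Real.exp (-ρ ^ 2 / 2)) := by
    have h := integrable_exp_neg_mul_sq (show (0:ℝ) < 1/2 by norm_num)
    have heq : (fun x : ℝ => Real.exp (-(1/2) * x ^ 2)) = fun x : ℝ => Real.exp (-x ^ 2 / 2) := by
      funext x; ring_nf
    rwa [heq] at h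
  have hgval : (∫ ρ : ℝ, Real.exp (-ρ ^ 2 / 2)) = Real.sqrt (2 * π) := by
    have h := integral_gaussian (1/2 : ℝ)
    have heq : (fun x : ℝ => Real.exp (-(1/2) * x ^ 2)) = fun x : ℝ => Real.exp (-x ^ 2 / 2) := by
      funext x; ring_nf
    rw [heq] at h
    rw [h, show π / (1/2 : ℝ) = 2 * π by ring]
  -- monotonicity of v x - b x
  have hw : Monotone (fun x => v x - b * x) := by
    apply monotone_of_deriv_nonneg
    · exact hv.sub ((differentiable_id.const_mul b))
    · intro x
      have h1 : HasDerivAt (fun x => v x - b * x) (deriv v x - b) x := by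
        have h2 : HasDerivAt (fun x : ℝ => b * x) b x := by
          simpa using (hasDerivAt_id x).const_mul b
        exact ((hv x).hasDerivAt).sub h2
      rw [h1.deriv]
      linarith [hv' x]
  -- existence of a zero
  set t₁ : ℝ := (|v 0| + 1) / b with ht₁def
  have ht₁ : 0 ≤ t₁ := by positivity
  have hbt₁ : b * t₁ = |v 0| + 1 := by rw [ht₁def]; field_simp
  have hvt₁ : 1 ≤ v t₁ := by
    have h : v 0 - b * 0 ≤ v t₁ - b * t₁ := hw ht₁
    have := neg_abs_le (v 0)
    linarith
  have hvt₂ : v (-t₁) ≤ -1 := by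
    have h : v (-t₁) - b * (-t₁) ≤ v 0 - b * 0 := hw (show -t₁ ≤ (0:ℝ) by linarith)
    have := le_abs_self (v 0)
    linarith [hbt₁]
  obtain ⟨x₀, -, hx₀⟩ : ∃ x₀ ∈ Icc (-t₁) t₁, v x₀ = 0 := by
    have him := intermediate_value_Icc (show -t₁ ≤ t₁ by linarith)
      (hv.continuous.continuousOn (s := Icc (-t₁) t₁))
    have h0 : (0:ℝ) ∈ Icc (v (-t₁)) (v t₁) := ⟨by linarith, by linarith⟩
    obtain ⟨x₀, hx₀mem, hx₀⟩ := him h0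
    exact ⟨x₀, hx₀mem, hx₀⟩
  -- key lower bound
  have hkey : ∀ ρ : ℝ, b * |ρ - x₀| ≤ |v ρ| := by
    intro ρ
    rcases le_total x₀ ρ with h | h
    · have h2 : v x₀ - b * x₀ ≤ v ρ - b * ρ := hw h
      rw [abs_of_nonneg (sub_nonneg.2 h)]
      have h3 := le_abs_self (v ρ)
      have h4 : b * (ρ - x₀) = b * ρ - b * x₀ := by ring
      linarith
    · have h2 : v ρ - b * ρ ≤ v x₀ - b * x₀ := hw h
      rw [abs_of_nonpos (sub_nonpos.2 h)]
      have h3 := neg_le_abs (v ρ)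
      have h4 : b * -(ρ - x₀) = b * x₀ - b * ρ := by ring
      linarith
  -- the comparison function
  set g : ℝ → ℝ := fun t => |t| ^ (-p) with hg
  set F : ℝ → ℝ := (Icc (-1:ℝ) 1).indicator g with hF
  have hintIoc01 : IntegrableOn g (Ioc (0:ℝ) 1) := by
    have h := intervalIntegral.intervalIntegrable_rpow' (a := 0) (b := 1)
      (show (-1:ℝ) < -p by linarith)
    rw [intervalIntegrable_iff_integrableOn_Ioc_of_le zero_le_one] at h
    exact h.congr_fun (fun x hx => by simp [hg, abs_of_pos hx.1]) measurableSet_Ioc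
  have hintIcc01 : IntegrableOn g (Icc (0:ℝ) 1) :=
    (integrableOn_Icc_iff_integrableOn_Ioc).2 hintIoc01
  have hneg_ind : (fun x : ℝ => (Icc (0:ℝ) 1).indicator g (-x)) = (Icc (-1:ℝ) 0).indicator g := by
    funext x
    by_cases hx : x ∈ Icc (-1:ℝ) 0
    · have hx' : -x ∈ Icc (0:ℝ) 1 := ⟨by linarith [hx.2], by linarith [hx.1]⟩
      rw [indicator_of_mem hx', indicator_of_mem hx]
      simp [hg, abs_neg]
    · have hx' : -x ∉ Icc (0:ℝ) 1 := by
        intro hmem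
        exact hx ⟨by linarith [hmem.2], by linarith [hmem.1]⟩
      rw [indicator_of_notMem hx', indicator_of_notMem hx]
  have hintIccneg : IntegrableOn g (Icc (-1:ℝ) 0) := by
    have h1 : Integrable ((Icc (0:ℝ) 1).indicator g) :=
      (integrable_indicator_iff measurableSet_Icc).2 hintIcc01
    have h2 := h1.comp_neg
    rw [hneg_ind] at h2
    exact (integrable_indicator_iff measurableSet_Icc).1 h2
  have hintIcc : IntegrableOn g (Icc (-1:ℝ) 1) := by
    rw [← Icc_union_Icc_eq_Icc (show (-1:ℝ) ≤ 0 by norm_num) (show (0:ℝ) ≤ 1 by norm_num)]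
    exact hintIccneg.union hintIcc01
  have hFint : Integrable F := (integrable_indicator_iff measurableSet_Icc).2 hintIcc
  -- value of ∫ F
  have hii01 : IntervalIntegrable g volume 0 1 :=
    (intervalIntegrable_iff_integrableOn_Ioc_of_le zero_le_one).2 hintIoc01
  have hiineg : IntervalIntegrable g volume (-1) 0 :=
    (intervalIntegrable_iff_integrableOn_Ioc_of_le (by norm_num)).2
      ((integrableOn_Icc_iff_integrableOn_Ioc).1 hintIccneg)
  have hval01 : (∫ t in (0:ℝ)..1, g t) = 1 / (1 - p) := by
    have hcong : (∫ t in (0:ℝ)..1, g t) = ∫ t in (0:ℝ)..1, t ^ (-p) := by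
      apply intervalIntegral.integral_congr
      intro x hx
      rw [uIcc_of_le zero_le_one] at hx
      simp [hg, abs_of_nonneg hx.1]
    rw [hcong, integral_rpow (Or.inl (by linarith : (-1:ℝ) < -p))]
    rw [Real.one_rpow, Real.zero_rpow (by linarith : -p + 1 ≠ 0), sub_zero,
      show -p + 1 = 1 - p by ring]
  have hvalneg : (∫ t in (-1:ℝ)..0, g t) = 1 / (1 - p) := by
    have h := intervalIntegral.integral_comp_neg (a := (0:ℝ)) (b := 1) g
    simp only [neg_zero] at h
    rw [← h]
    have hcong : (∫ t in (0:ℝ)..1, g (-t)) = ∫ t in (0:ℝ)..1, g t := by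
      apply intervalIntegral.integral_congr
      intro x _
      simp [hg, abs_neg]
    rw [hcong, hval01]
  have hFval : (∫ t : ℝ, F t) = 2 / (1 - p) := by
    rw [hF, integral_indicator measurableSet_Icc, integral_Icc_eq_integral_Ioc,
      ← intervalIntegral.integral_of_le (show (-1:ℝ) ≤ 1 by norm_num),
      ← intervalIntegral.integral_add_adjacent_intervals hiineg hii01, hval01, hvalneg]
    ring
  -- pointwise bound
  set G : ℝ → ℝ := fun ρ => b ^ (-p) * (F (ρ - x₀) + Real.exp (-ρ ^ 2 / 2)) with hGdef
  have hbp : (0:ℝ) < b ^ (-p) := Real.rpow_pos_of_pos hb _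
  have hfG : ∀ ρ : ℝ, Real.exp (-ρ ^ 2 / 2) * |v ρ| ^ (-p) ≤ G ρ := by
    intro ρ
    have e_pos : 0 < Real.exp (-ρ ^ 2 / 2) := Real.exp_pos _
    have e_le : Real.exp (-ρ ^ 2 / 2) ≤ 1 := by
      rw [show (1:ℝ) = Real.exp 0 from (Real.exp_zero).symm]
      exact Real.exp_le_exp.2 (by nlinarith [sq_nonneg ρ])
    have h1 : |v ρ| ^ (-p) ≤ b ^ (-p) * |ρ - x₀| ^ (-p) := by
      rcases eq_or_lt_of_le (abs_nonneg (ρ - x₀)) with h0 | h0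
      · have hx : ρ = x₀ := by
          have := abs_eq_zero.1 h0.symm
          linarith [sub_eq_zero.1 this]
        rw [hx, hx₀]
        simp [Real.zero_rpow (show -p ≠ 0 by linarith)]
      · have hpos : 0 < b * |ρ - x₀| := mul_pos hb h0
        have h2 := Real.rpow_le_rpow_of_nonpos hpos (hkey ρ) (by linarith : -p ≤ 0)
        rwa [Real.mul_rpow hb.le (abs_nonneg _)] at h2
    have h2 : Real.exp (-ρ ^ 2 / 2) * |ρ - x₀| ^ (-p)
        ≤ F (ρ - x₀) + Real.exp (-ρ ^ 2 / 2) := by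
      by_cases hρ : ρ - x₀ ∈ Icc (-1:ℝ) 1
      · rw [hF, indicator_of_mem hρ]
        have hr : 0 ≤ |ρ - x₀| ^ (-p) := Real.rpow_nonneg (abs_nonneg _) _
        nlinarith
      · rw [hF, indicator_of_notMem hρ, zero_add]
        have h1' : 1 ≤ |ρ - x₀| := by
          by_contra hcon
          push_neg at hcon
          rw [abs_lt] at hcon
          exact hρ ⟨by linarith [hcon.1], by linarith [hcon.2]⟩
        have := Real.rpow_le_one_of_one_le_of_nonpos h1' (by linarith : -p ≤ 0)
        nlinarith
    calc Real.exp (-ρ ^ 2 / 2) * |v ρ| ^ (-p)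
        ≤ Real.exp (-ρ ^ 2 / 2) * (b ^ (-p) * |ρ - x₀| ^ (-p)) :=
          mul_le_mul_of_nonneg_left h1 e_pos.le
      _ = b ^ (-p) * (Real.exp (-ρ ^ 2 / 2) * |ρ - x₀| ^ (-p)) := by ring
      _ ≤ G ρ := mul_le_mul_of_nonneg_left h2 hbp.le
  have hGint : Integrable G := ((hFint.comp_sub_right x₀).add hgint).const_mul _
  have hmain : (∫ ρ : ℝ, Real.exp (-ρ ^ 2 / 2) * |v ρ| ^ (-p)) ≤ b ^ (-p) * C₀ := by
    have hle : (∫ ρ : ℝ, Real.exp (-ρ ^ 2 / 2) * |v ρ| ^ (-p)) ≤ ∫ ρ : ℝ, G ρ := by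
      apply integral_mono_of_nonneg
      · exact ae_of_all _ fun ρ =>
          mul_nonneg (Real.exp_pos _).le (Real.rpow_nonneg (abs_nonneg _) _)
      · exact hGint
      · exact ae_of_all _ hfG
    have hGval : (∫ ρ : ℝ, G ρ) = b ^ (-p) * C₀ := by
      have step1 : (∫ ρ : ℝ, G ρ)
          = b ^ (-p) * ∫ ρ : ℝ, (F (ρ - x₀) + Real.exp (-ρ ^ 2 / 2)) :=
        integral_const_mul _ _
      rw [step1, integral_add (hFint.comp_sub_right x₀) hgint,
        integral_sub_right_eq_self F x₀, hFval, hgval]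
    exact le_of_le_of_eq hle hGval
  calc (1 / Real.sqrt (2 * π)) * ∫ ρ : ℝ, Real.exp (-ρ ^ 2 / 2) * |v ρ| ^ (-p)
      ≤ (1 / Real.sqrt (2 * π)) * (b ^ (-p) * C₀) := by
        apply mul_le_mul_of_nonneg_left hmain (by positivity)
    _ = C₀ / Real.sqrt (2 * π) * b ^ (-p) := by ring
end

section
/- Let u : ℝ² → ℝ be a positive C² function satisfying Δu ≥ κ u for some κ > 0. Then for any closed ball B = B̄(y₀, r) ⊂ ℝ², max_{y∈B} u(y) ≥ (1 + κ r²/4) · min_{y∈B} u(y). -/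
/-!
Put `A < κ m / 4`, where `m` is the minimum of `u` on `B = B̄(y₀, r)`. Then `v = u - A‖· - y₀‖²`
satisfies `Δv = Δu - 4A ≥ κ m - 4A > 0` on `B`, so `v` cannot have an interior maximum (there
every second directional derivative of `v` would be `≤ 0`). Comparing `v` at the centre with its
maximum on the boundary sphere gives `m + A r² ≤ u y₀ + A r² ≤ max_B u`; let `A → κ m / 4`.
-/

noncomputable section

/-- The Laplacian of a function on the Euclidean plane, as the sum of second
directional derivatives along the two coordinate axes. -/
def lap2 (u : EuclideanSpace ℝ (Fin 2) → ℝ) (y : EuclideanSpace ℝ (Fin 2)) : ℝ :=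
  iteratedDeriv 2 (fun t : ℝ => u (y + t • EuclideanSpace.single (0 : Fin 2) (1 : ℝ))) 0 +
  iteratedDeriv 2 (fun t : ℝ => u (y + t • EuclideanSpace.single (1 : Fin 2) (1 : ℝ))) 0

end

open Set Filter Metric Topology

theorem IsLocalMax.iteratedDeriv_two_nonpos {f : ℝ → ℝ} {x₀ : ℝ} (h : IsLocalMax f x₀)
    (hc : ContinuousAt f x₀) : iteratedDeriv 2 f x₀ ≤ 0 := by
  rw [iteratedDeriv_succ, iteratedDeriv_one]
  by_contra! hpos
  -- by the second derivative test `x₀` would also be a local minimum, so `f` is locally constant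
  have hconst : f =ᶠ[𝓝 x₀] fun _ => f x₀ := by
    filter_upwards [h, isLocalMin_of_deriv_deriv_pos hpos h.deriv_eq_zero hc] with x hmax hmin
    exact le_antisymm hmax hmin
  have hzero : deriv (deriv f) x₀ = 0 := by
    rw [hconst.deriv.deriv_eq]
    simp
  linarith

section InnerProductSpace

variable {E : Type*} [NormedAddCommGroup E] [InnerProductSpace ℝ E]

theorem iteratedDeriv_two_mul_norm_add_smul_sq (A : ℝ) (w e : E) :
    iteratedDeriv 2 (fun t : ℝ => A * ‖w + t • e‖ ^ 2) 0 = 2 * A * ‖e‖ ^ 2 := by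
  have hpoly : (fun t : ℝ => A * ‖w + t • e‖ ^ 2) =
      fun t => A * ‖w‖ ^ 2 + 2 * A * inner ℝ w e * t + A * ‖e‖ ^ 2 * t ^ 2 := by
    ext t
    rw [norm_add_sq_real, real_inner_smul_right, norm_smul, mul_pow, Real.norm_eq_abs, sq_abs]
    ring
  set a := A * ‖w‖ ^ 2
  set b := 2 * A * inner ℝ w e
  set c := A * ‖e‖ ^ 2
  have hderiv (t : ℝ) : HasDerivAt (fun t : ℝ => a + b * t + c * t ^ 2) (b + c * (2 * t)) t := by
    simpa using (((hasDerivAt_id t).const_mul b).const_add a).fun_add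
      ((hasDerivAt_pow 2 t).const_mul c)
  have hderiv2 : HasDerivAt (fun t : ℝ => b + c * (2 * t)) (2 * c) 0 := by
    simpa [mul_comm] using (((hasDerivAt_id (0 : ℝ)).const_mul 2).const_mul c).const_add b
  rw [hpoly, iteratedDeriv_succ, iteratedDeriv_one, funext fun t => (hderiv t).deriv,
    hderiv2.deriv, mul_assoc]

theorem iteratedDeriv_two_comp_line_le_of_isLocalMax {u : E → ℝ} (hu : ContDiff ℝ 2 u)
    {A : ℝ} {y₀ p : E} (hmax : IsLocalMax (fun y => u y - A * ‖y - y₀‖ ^ 2) p) (e : E) :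
    iteratedDeriv 2 (fun t : ℝ => u (p + t • e)) 0 ≤ 2 * A * ‖e‖ ^ 2 := by
  have hline : Continuous fun t : ℝ => p + t • e := by fun_prop
  have hφ : ContDiff ℝ 2 fun t : ℝ => u (p + t • e) := hu.comp (by fun_prop)
  have hq : ContDiff ℝ 2 fun t : ℝ => A * ‖(p - y₀) + t • e‖ ^ 2 :=
    contDiff_const.mul (ContDiff.norm_sq ℝ (by fun_prop))
  have hrestrict : IsLocalMax (fun t : ℝ => u (p + t • e) - A * ‖(p - y₀) + t • e‖ ^ 2) 0 := by
    have := IsLocalMax.comp_continuous (g := fun t : ℝ => p + t • e) (b := 0)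
      (by simpa using hmax) hline.continuousAt
    simpa only [Function.comp_def, sub_add_eq_add_sub] using this
  have hle := hrestrict.iteratedDeriv_two_nonpos (hφ.sub hq).continuous.continuousAt
  rw [iteratedDeriv_fun_sub hφ.contDiffAt hq.contDiffAt,
    iteratedDeriv_two_mul_norm_add_smul_sq] at hle
  linarith

end InnerProductSpace

theorem lap2_le_of_isLocalMax_sub_mul_norm_sq {u : EuclideanSpace ℝ (Fin 2) → ℝ}
    (hu : ContDiff ℝ 2 u) {A : ℝ} {y₀ p : EuclideanSpace ℝ (Fin 2)}
    (hmax : IsLocalMax (fun y => u y - A * ‖y - y₀‖ ^ 2) p) : lap2 u p ≤ 4 * A := by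
  have h₀ := iteratedDeriv_two_comp_line_le_of_isLocalMax hu hmax (EuclideanSpace.single 0 1)
  have h₁ := iteratedDeriv_two_comp_line_le_of_isLocalMax hu hmax (EuclideanSpace.single 1 1)
  simp only [PiLp.norm_single, norm_one, one_pow, mul_one] at h₀ h₁
  rw [lap2]
  linarith

theorem add_mul_sq_le_sSup_image_closedBall {u : EuclideanSpace ℝ (Fin 2) → ℝ}
    (hu : ContDiff ℝ 2 u) {A r : ℝ} {y₀ : EuclideanSpace ℝ (Fin 2)} (hr : 0 ≤ r)
    (hlap : ∀ y ∈ ball y₀ r, 4 * A < lap2 u y) :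
    u y₀ + A * r ^ 2 ≤ sSup (u '' closedBall y₀ r) := by
  set v := fun y => u y - A * ‖y - y₀‖ ^ 2
  have hv : Continuous v := hu.continuous.sub (continuous_const.mul (by fun_prop))
  obtain ⟨p, hpB, hp⟩ :=
    (isCompact_closedBall y₀ r).exists_isMaxOn (nonempty_closedBall.2 hr) hv.continuousOn
  have hp_sphere : ‖p - y₀‖ = r := by
    refine le_antisymm (mem_closedBall_iff_norm.1 hpB) (not_lt.1 fun hlt => ?_)
    have hloc : IsLocalMax v p :=
      hp.isLocalMax (mem_of_superset (isOpen_ball.mem_nhds (mem_ball_iff_norm.2 hlt))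
        ball_subset_closedBall)
    exact (hlap p (mem_ball_iff_norm.2 hlt)).not_ge (lap2_le_of_isLocalMax_sub_mul_norm_sq hu hloc)
  have hcentre : v y₀ ≤ v p := hp (mem_closedBall_self hr)
  have hup : u p ≤ sSup (u '' closedBall y₀ r) :=
    le_csSup ((isCompact_closedBall y₀ r).bddAbove_image hu.continuous.continuousOn)
      (mem_image_of_mem u hpB)
  simp only [v, sub_self, norm_zero, hp_sphere] at hcentre
  linarith

theorem stmt4_general (u : EuclideanSpace ℝ (Fin 2) → ℝ) (κ : ℝ) (hκ : 0 < κ)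
    (hsmooth : ContDiff ℝ 2 u)
    (hlap : ∀ y, κ * u y ≤ lap2 u y)
    (y₀ : EuclideanSpace ℝ (Fin 2)) (r : ℝ) (hr : 0 ≤ r) :
    (1 + κ * r ^ 2 / 4) * sInf (u '' Metric.closedBall y₀ r)
      ≤ sSup (u '' Metric.closedBall y₀ r) := by
  set m := sInf (u '' closedBall y₀ r)
  set M := sSup (u '' closedBall y₀ r)
  have hm (y) (hy : y ∈ closedBall y₀ r) : m ≤ u y :=
    csInf_le ((isCompact_closedBall y₀ r).bddBelow_image hsmooth.continuous.continuousOn)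
      (mem_image_of_mem u hy)
  have hbelow : Iio (κ * m / 4) ⊆ {A | m + A * r ^ 2 ≤ M} := fun A hA => by
    show m + A * r ^ 2 ≤ M
    have hlapA (y) (hy : y ∈ ball y₀ r) : 4 * A < lap2 u y := calc
      4 * A < κ * m := by linarith [mem_Iio.1 hA]
      _ ≤ κ * u y := mul_le_mul_of_nonneg_left (hm y (ball_subset_closedBall hy)) hκ.le
      _ ≤ lap2 u y := hlap y
    have := add_mul_sq_le_sSup_image_closedBall hsmooth hr hlapA
    linarith [hm y₀ (mem_closedBall_self hr)]
  have hlimit : m + κ * m / 4 * r ^ 2 ≤ M :=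
    (isClosed_le (by fun_prop) continuous_const).closure_subset_iff.2 hbelow
      (by rw [closure_Iio]; exact self_mem_Iic)
  linarith

/-- Ahlfors-type lemma: if u > 0 is C² on ℝ² and Δu ≥ κu with κ > 0, then on any closed
ball B of radius r, max_B u ≥ (1 + κr²/4) min_B u. -/
theorem stmt4 (u : EuclideanSpace ℝ (Fin 2) → ℝ) (κ : ℝ) (hκ : 0 < κ)
    (hpos : ∀ y, 0 < u y) (hsmooth : ContDiff ℝ 2 u)
    (hlap : ∀ y, κ * u y ≤ lap2 u y)
    (y₀ : EuclideanSpace ℝ (Fin 2)) (r : ℝ) (hr : 0 ≤ r) :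
    (1 + κ * r ^ 2 / 4) * sInf (u '' Metric.closedBall y₀ r)
      ≤ sSup (u '' Metric.closedBall y₀ r) :=
  stmt4_general u κ hκ hsmooth hlap y₀ r hr
end

section
/- Let T be a compact self-adjoint operator on a separable Hilbert space H with Id + T ≥ 0 (positive semidefinite). Then the eigenspace of T corresponding to the eigenvalue -1 is finite-dimensional, and if φ₁,…,φ_{l₀} is an orthonormal basis of this eigenspace, then for a vector u ∈ H there exists ε > 0 with Id + T - ε u⊗u ≥ 0 if and only if ⟨u, φⱼ⟩ = 0 for all j = 1,…,l₀. -/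
/-!
Put `A = 1 + T ≥ 0`, so that the `-1`-eigenspace of `T` is `E = ker A`. Compactness of `T`
makes `A` coercive on `Eᗮ`, `⟪q, A q⟫ ≥ δ ‖q‖²`: otherwise there are unit vectors `yₙ ∈ Eᗮ`
with `⟪yₙ, A yₙ⟫ → 0`, hence `A yₙ → 0` by Cauchy–Schwarz for the semidefinite form
`⟪·, A ·⟫`, so `yₙ = A yₙ - T yₙ` has a convergent subsequence whose limit is a unit vector in
`E ∩ Eᗮ`. If `u ⊥ E`, split `x = p + q` along `E ⊕ Eᗮ`: then `⟪u, x⟫² ≤ ‖u‖² ‖q‖²` while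
`⟪x, A x⟫ = ⟪q, A q⟫`. Conversely, testing the inequality on `x ∈ E`, where `⟪x, A x⟫ = 0`,
forces `⟪u, x⟫ = 0`.
-/

open scoped InnerProductSpace
open Filter Topology

theorem Submodule.mem_orthogonal_span_range_iff {𝕜 E ι : Type*} [RCLike 𝕜] [NormedAddCommGroup E]
    [InnerProductSpace 𝕜 E] (φ : ι → E) (u : E) :
    u ∈ (span 𝕜 (Set.range φ))ᗮ ↔ ∀ j, ⟪u, φ j⟫_𝕜 = 0 := by
  rw [mem_orthogonal']
  refine ⟨fun h j => h _ (subset_span (Set.mem_range_self j)), fun h v hv => ?_⟩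
  exact (span_le (p := LinearMap.ker (innerₛₗ 𝕜 u))).2 (Set.range_subset_iff.2 h) hv

theorem ContinuousLinearMap.eigenspace_neg_one_eq_ker_one_add {R M : Type*} [CommRing R]
    [AddCommGroup M] [Module R M] [TopologicalSpace M] [ContinuousAdd M] (T : M →L[R] M) :
    Module.End.eigenspace (T : M →ₗ[R] M) (-1) = (1 + T).ker := by
  ext x
  simp [add_eq_zero_iff_eq_neg']

theorem IsCompactOperator.exists_tendsto_subseq_of_tendsto_add {𝕜 E : Type*}
    [NontriviallyNormedField 𝕜] [NormedAddCommGroup E] [NormedSpace 𝕜 E] {T : E →L[𝕜] E}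
    (hT : IsCompactOperator T) {y : ℕ → E} {r : ℝ} (hy : ∀ n, ‖y n‖ ≤ r) {b : E}
    (hyT : Tendsto (fun n => y n + T (y n)) atTop (𝓝 b)) :
    ∃ w, ∃ φ : ℕ → ℕ, StrictMono φ ∧ Tendsto (y ∘ φ) atTop (𝓝 w) := by
  obtain ⟨K, hK, hTK⟩ := hT.image_closedBall_subset_compact r
  obtain ⟨z, -, φ, hφ, hz⟩ := hK.tendsto_subseq fun n => hTK ⟨y n, by simpa using hy n, rfl⟩
  exact ⟨b - z, φ, hφ, by simpa [Function.comp_def] using (hyT.comp hφ.tendsto_atTop).sub hz⟩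

namespace ContinuousLinearMap

variable {H : Type*} [NormedAddCommGroup H] [InnerProductSpace ℝ H] {A : H →L[ℝ] H}

theorem IsPositive.norm_apply_sq_le (hA : A.IsPositive) (x : H) :
    ‖A x‖ ^ 2 ≤ ‖A‖ * ⟪x, A x⟫_ℝ := by
  let B : LinearMap.BilinForm ℝ H := (innerₗ H).compl₂ (A : H →ₗ[ℝ] H)
  have hcs := B.apply_mul_apply_le_of_forall_zero_le hA.inner_nonneg_right x (A x)
  have hAx : ⟪x, A (A x)⟫_ℝ = ‖A x‖ ^ 2 := by
    rw [← hA.inner_left_eq_inner_right, real_inner_self_eq_norm_sq]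
  have hAAx : ⟪A x, A (A x)⟫_ℝ ≤ ‖A‖ * ‖A x‖ ^ 2 := by
    calc ⟪A x, A (A x)⟫_ℝ ≤ ‖A x‖ * ‖A (A x)‖ := real_inner_le_norm _ _
      _ ≤ ‖A x‖ * (‖A‖ * ‖A x‖) := by gcongr; exact A.le_opNorm _
      _ = ‖A‖ * ‖A x‖ ^ 2 := by ring
  simp only [B, LinearMap.compl₂_apply, innerₗ_apply_apply, coe_coe, hAx,
    real_inner_self_eq_norm_sq] at hcs
  rcases (sq_nonneg ‖A x‖).eq_or_lt with h0 | h0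
  · rw [← h0]
    exact mul_nonneg (norm_nonneg _) (hA.inner_nonneg_right x)
  · refine le_of_mul_le_mul_right ?_ h0
    calc ‖A x‖ ^ 2 * ‖A x‖ ^ 2 ≤ ⟪x, A x⟫_ℝ * ⟪A x, A (A x)⟫_ℝ := hcs
      _ ≤ ⟪x, A x⟫_ℝ * (‖A‖ * ‖A x‖ ^ 2) := by gcongr; exact hA.inner_nonneg_right x
      _ = ‖A‖ * ⟪x, A x⟫_ℝ * ‖A x‖ ^ 2 := by ring

theorem IsPositive.tendsto_apply_nhds_zero (hA : A.IsPositive) {ι : Type*} {l : Filter ι}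
    {y : ι → H} (hy : Tendsto (fun n => ⟪y n, A (y n)⟫_ℝ) l (𝓝 0)) :
    Tendsto (fun n => A (y n)) l (𝓝 0) := by
  rw [tendsto_zero_iff_norm_tendsto_zero]
  have hsqrt : Tendsto (fun n => √(‖A‖ * ⟪y n, A (y n)⟫_ℝ)) l (𝓝 0) := by
    simpa using ((hy.const_mul ‖A‖).sqrt)
  exact squeeze_zero (fun _ => norm_nonneg _)
    (fun n => Real.le_sqrt_of_sq_le (hA.norm_apply_sq_le (y n))) hsqrt

theorem mem_orthogonal_ker_of_forall_nonneg_inner_apply_sub {u : H} {ε : ℝ} (hε : 0 < ε)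
    (h : ∀ x, 0 ≤ ⟪x, A x⟫_ℝ - ε * ⟪u, x⟫_ℝ ^ 2) : u ∈ A.kerᗮ := by
  refine (Submodule.mem_orthogonal' _ _).2 fun v hv => ?_
  have hAv : A v = 0 := hv
  have huv := h v
  rw [hAv, inner_zero_right, zero_sub, neg_nonneg] at huv
  exact pow_eq_zero_iff two_ne_zero |>.1 <| le_antisymm
    (nonpos_of_mul_nonpos_right huv hε) (sq_nonneg _)

theorem exists_pos_forall_nonneg_inner_apply_sub_of_mem_orthogonal_ker {u : H} (hA : A.IsSymmetric)
    [A.ker.HasOrthogonalProjection] {δ : ℝ} (hδ : 0 < δ)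
    (hcoer : ∀ x ∈ A.kerᗮ, δ * ‖x‖ ^ 2 ≤ ⟪x, A x⟫_ℝ) (hu : u ∈ A.kerᗮ) :
    ∃ ε, 0 < ε ∧ ∀ x, 0 ≤ ⟪x, A x⟫_ℝ - ε * ⟪u, x⟫_ℝ ^ 2 := by
  refine ⟨δ / (‖u‖ ^ 2 + 1), by positivity, fun x => ?_⟩
  obtain ⟨p, hp, q, hq, rfl⟩ := A.ker.exists_add_mem_mem_orthogonal x
  have hAp : A p = 0 := hp
  have hQ : ⟪p + q, A (p + q)⟫_ℝ = ⟪q, A q⟫_ℝ := by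
    have hpq : ⟪p, A q⟫_ℝ = 0 := by simpa [hAp] using (hA p q).symm
    rw [map_add, hAp, zero_add, inner_add_left, hpq, zero_add]
  have hup : ⟪u, p + q⟫_ℝ = ⟪u, q⟫_ℝ := by
    rw [inner_add_right, (Submodule.mem_orthogonal' _ _).1 hu p hp, zero_add]
  have hcs : ⟪u, q⟫_ℝ ^ 2 ≤ (‖u‖ ^ 2 + 1) * ‖q‖ ^ 2 := by
    calc ⟪u, q⟫_ℝ ^ 2 ≤ (‖u‖ * ‖q‖) ^ 2 := by
          simpa only [sq_abs] using pow_le_pow_left₀ (abs_nonneg _) (abs_real_inner_le_norm u q) 2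
      _ ≤ (‖u‖ ^ 2 + 1) * ‖q‖ ^ 2 := by nlinarith [sq_nonneg ‖q‖]
  rw [hQ, hup, sub_nonneg]
  calc δ / (‖u‖ ^ 2 + 1) * ⟪u, q⟫_ℝ ^ 2 ≤ δ / (‖u‖ ^ 2 + 1) * ((‖u‖ ^ 2 + 1) * ‖q‖ ^ 2) := by
        gcongr
    _ = δ * ‖q‖ ^ 2 := by field_simp
    _ ≤ ⟪q, A q⟫_ℝ := hcoer q hq

end ContinuousLinearMap

theorem IsCompactOperator.exists_pos_mul_norm_sq_le_inner_one_add_apply {H : Type*}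
    [NormedAddCommGroup H] [InnerProductSpace ℝ H] {T : H →L[ℝ] H} (hT : IsCompactOperator T)
    (hA : (1 + T).IsPositive) :
    ∃ δ, 0 < δ ∧ ∀ x ∈ ((1 + T).ker)ᗮ, δ * ‖x‖ ^ 2 ≤ ⟪x, (1 + T) x⟫_ℝ := by
  set A := 1 + T
  set E := A.ker
  by_contra! h
  have hunit : ∀ n : ℕ, ∃ y ∈ Eᗮ, ‖y‖ = 1 ∧ ⟪y, A y⟫_ℝ < 1 / (n + 1) := by
    intro n
    obtain ⟨x, hxE, hx⟩ := h (1 / (n + 1)) (by positivity)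
    have hx0 : 0 < ‖x‖ := by
      refine norm_pos_iff.2 fun hx0 => ?_
      simp [hx0] at hx
    refine ⟨‖x‖⁻¹ • x, Eᗮ.smul_mem _ hxE, by simp [norm_smul, hx0.ne'], ?_⟩
    calc ⟪‖x‖⁻¹ • x, A (‖x‖⁻¹ • x)⟫_ℝ = ⟪x, A x⟫_ℝ / ‖x‖ ^ 2 := by
          simp only [map_smul, real_inner_smul_left, real_inner_smul_right]
          field_simp
      _ < 1 / (n + 1) := by rwa [div_lt_iff₀ (by positivity)]
  choose y hyE hy1 hyA using hunit
  have hAy : Tendsto (fun n => A (y n)) atTop (𝓝 0) :=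
    hA.tendsto_apply_nhds_zero <| squeeze_zero (fun n => hA.inner_nonneg_right _)
      (fun n => (hyA n).le) tendsto_one_div_add_atTop_nhds_zero_nat
  obtain ⟨w, φ, hφ, hw⟩ := hT.exists_tendsto_subseq_of_tendsto_add (fun n => (hy1 n).le) hAy
  have hw1 : ‖w‖ = 1 := tendsto_nhds_unique hw.norm (by simp [hy1])
  have hwE : w ∈ E :=
    tendsto_nhds_unique ((A.continuous.tendsto w).comp hw) (hAy.comp hφ.tendsto_atTop)
  have hwE' : w ∈ Eᗮ :=
    E.isClosed_orthogonal.mem_of_tendsto hw (Eventually.of_forall fun n => hyE (φ n))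
  have hw0 : w = 0 := by simpa using E.inf_orthogonal_eq_bot.le ⟨hwE, hwE'⟩
  simp [hw0] at hw1

theorem stmt6_general {H : Type*} [NormedAddCommGroup H] [InnerProductSpace ℝ H]
    [CompleteSpace H]
    (T : H →L[ℝ] H) (hT : IsCompactOperator T) (hTsa : IsSelfAdjoint T)
    (hpos : ∀ x : H, 0 ≤ ⟪x, x⟫_ℝ + ⟪x, T x⟫_ℝ) :
    FiniteDimensional ℝ (Module.End.eigenspace (T : H →ₗ[ℝ] H) (-1)) ∧
    ∀ (l₀ : ℕ) (φ : Fin l₀ → H), Orthonormal ℝ φ →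
      Submodule.span ℝ (Set.range φ) = Module.End.eigenspace (T : H →ₗ[ℝ] H) (-1) →
      ∀ u : H,
        (∃ ε : ℝ, 0 < ε ∧ ∀ x : H, 0 ≤ ⟪x, x⟫_ℝ + ⟪x, T x⟫_ℝ - ε * ⟪u, x⟫_ℝ ^ 2) ↔
        (∀ j, ⟪u, φ j⟫_ℝ = 0) := by
  have hQ (x : H) : ⟪x, (1 + T) x⟫_ℝ = ⟪x, x⟫_ℝ + ⟪x, T x⟫_ℝ := inner_add_right _ _ _
  have hA : (1 + T).IsPositive :=
    (ContinuousLinearMap.isPositive_iff' _).2 ⟨(IsSelfAdjoint.one _).add hTsa,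
      fun x => by rw [real_inner_comm, hQ]; exact hpos x⟩
  obtain ⟨δ, hδ, hcoer⟩ := hT.exists_pos_mul_norm_sq_le_inner_one_add_apply hA
  refine ⟨T.finite_dimensional_eigenspace hT (-1) (by norm_num), fun l₀ φ _ hφ u => ?_⟩
  rw [T.eigenspace_neg_one_eq_ker_one_add] at hφ
  simp_rw [← hQ, ← Submodule.mem_orthogonal_span_range_iff, hφ]
  exact ⟨fun ⟨_, hε, h⟩ =>
      ContinuousLinearMap.mem_orthogonal_ker_of_forall_nonneg_inner_apply_sub hε h,
    ContinuousLinearMap.exists_pos_forall_nonneg_inner_apply_sub_of_mem_orthogonal_ker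
      hA.isSymmetric hδ hcoer⟩

/-- For a compact self-adjoint operator T on a separable real Hilbert space with
Id + T ≥ 0: the eigenspace of T at -1 is finite-dimensional, and if φ₁,…,φ_{l₀} is an
orthonormal basis of this eigenspace, then for u ∈ H there is ε > 0 with
Id + T - ε u⊗u ≥ 0 iff ⟨u, φⱼ⟩ = 0 for all j. -/
theorem stmt6 {H : Type*} [NormedAddCommGroup H] [InnerProductSpace ℝ H]
    [CompleteSpace H] [TopologicalSpace.SeparableSpace H]
    (T : H →L[ℝ] H) (hT : IsCompactOperator T) (hTsa : IsSelfAdjoint T)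
    (hpos : ∀ x : H, 0 ≤ ⟪x, x⟫_ℝ + ⟪x, T x⟫_ℝ) :
    FiniteDimensional ℝ (Module.End.eigenspace (T : H →ₗ[ℝ] H) (-1)) ∧
    ∀ (l₀ : ℕ) (φ : Fin l₀ → H), Orthonormal ℝ φ →
      Submodule.span ℝ (Set.range φ) = Module.End.eigenspace (T : H →ₗ[ℝ] H) (-1) →
      ∀ u : H,
        (∃ ε : ℝ, 0 < ε ∧ ∀ x : H, 0 ≤ ⟪x, x⟫_ℝ + ⟪x, T x⟫_ℝ - ε * ⟪u, x⟫_ℝ ^ 2) ↔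
        (∀ j, ⟪u, φ j⟫_ℝ = 0) :=
  stmt6_general T hT hTsa hpos
end

section
/- Let (e_j)_{j≥1} be an orthonormal basis of a separable Hilbert space H and set a := ∑_{j≥1} 2^{-j/2} e_j. Then Id - a⊗a ≥ 0, but for every n ≥ 1 and every ε > 0, Id - a⊗a - ε eₙ⊗eₙ is not positive semidefinite. -/
/-!
Since `∑ 2^{-j} = 1`, the vector `a` is a unit vector, so Cauchy–Schwarz gives `⟪a, x⟫² ≤ ⟪x, x⟫`.
Testing the perturbed form on `x = a` itself kills the first two terms and leaves
`-ε ⟪eₙ, a⟫² = -ε 2^{-(n+1)} < 0`.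
-/

open scoped InnerProductSpace

section UnitVector

variable {E : Type*} [NormedAddCommGroup E] [InnerProductSpace ℝ E] {a : E}

theorem inner_self_sub_sq_inner_nonneg (ha : ⟪a, a⟫_ℝ ≤ 1) (x : E) :
    0 ≤ ⟪x, x⟫_ℝ - ⟪a, x⟫_ℝ ^ 2 := by
  have hCS := real_inner_mul_inner_self_le a x
  nlinarith [real_inner_self_nonneg (x := x)]

theorem exists_inner_self_sub_sq_inner_sub_neg (ha : ⟪a, a⟫_ℝ = 1) {v : E} (hv : ⟪v, a⟫_ℝ ≠ 0)
    {ε : ℝ} (hε : 0 < ε) : ∃ x : E, ⟪x, x⟫_ℝ - ⟪a, x⟫_ℝ ^ 2 - ε * ⟪v, x⟫_ℝ ^ 2 < 0 :=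
  ⟨a, by rw [ha]; linarith [mul_pos hε (sq_pos_of_ne_zero hv)]⟩

end UnitVector

namespace HilbertBasis

variable {ι : Type*}

theorem inner_tsum_smul {𝕜 E : Type*} [RCLike 𝕜] [NormedAddCommGroup E] [InnerProductSpace 𝕜 E]
    (e : HilbertBasis ι 𝕜 E) {c : ι → 𝕜} (hc : Memℓp c 2) (i : ι) :
    ⟪e i, ∑' j, c j • e j⟫_𝕜 = c i := by
  rw [(e.hasSum_repr_symm ⟨c, hc⟩).tsum_eq, ← e.repr_apply_apply,
    LinearIsometryEquiv.apply_symm_apply]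

theorem real_inner_self_eq_tsum_sq {E : Type*} [NormedAddCommGroup E] [InnerProductSpace ℝ E]
    (e : HilbertBasis ι ℝ E) (x : E) : ⟪x, x⟫_ℝ = ∑' j, ⟪e j, x⟫_ℝ ^ 2 := by
  rw [← e.tsum_inner_mul_inner x x]
  simp_rw [real_inner_comm x, sq]

end HilbertBasis

theorem sq_two_rpow_neg_succ_div_two (j : ℕ) :
    ((2 : ℝ) ^ (-((j : ℝ) + 1) / 2)) ^ 2 = 1 / 2 / 2 ^ j := by
  rw [← Real.rpow_natCast, ← Real.rpow_mul zero_le_two, div_div, ← pow_succ']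
  have : -((j : ℝ) + 1) / 2 * ((2 : ℕ) : ℝ) = -((j + 1 : ℕ) : ℝ) := by push_cast; ring
  rw [this, Real.rpow_neg zero_le_two, Real.rpow_natCast, one_div]

theorem hasSum_sq_two_rpow_neg_succ_div_two :
    HasSum (fun j : ℕ => ((2 : ℝ) ^ (-((j : ℝ) + 1) / 2)) ^ 2) 1 := by
  simpa only [sq_two_rpow_neg_succ_div_two] using hasSum_geometric_two' 1

theorem memℓp_two_rpow_neg_succ_div_two :
    Memℓp (fun j : ℕ => (2 : ℝ) ^ (-((j : ℝ) + 1) / 2)) 2 := by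
  refine memℓp_gen ?_
  simpa [Real.norm_eq_abs, abs_of_pos, Real.rpow_pos_of_pos] using
    hasSum_sq_two_rpow_neg_succ_div_two.summable

theorem stmt7_general {H : Type*} [NormedAddCommGroup H] [InnerProductSpace ℝ H]
    (e : HilbertBasis ℕ ℝ H)
    (a : H) (ha : a = ∑' j : ℕ, ((2 : ℝ) ^ (-((j : ℝ) + 1) / 2)) • e j) :
    (∀ x : H, 0 ≤ ⟪x, x⟫_ℝ - ⟪a, x⟫_ℝ ^ 2) ∧
    ∀ (n : ℕ) (ε : ℝ), 0 < ε →
      ∃ x : H, ⟪x, x⟫_ℝ - ⟪a, x⟫_ℝ ^ 2 - ε * ⟪e n, x⟫_ℝ ^ 2 < 0 := by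
  have hcoeff : ∀ n, ⟪e n, a⟫_ℝ = (2 : ℝ) ^ (-((n : ℝ) + 1) / 2) := fun n => by
    rw [ha]; exact e.inner_tsum_smul memℓp_two_rpow_neg_succ_div_two n
  have hunit : ⟪a, a⟫_ℝ = 1 := by
    simp only [e.real_inner_self_eq_tsum_sq a, hcoeff]
    exact hasSum_sq_two_rpow_neg_succ_div_two.tsum_eq
  refine ⟨inner_self_sub_sq_inner_nonneg hunit.le, fun n ε hε => ?_⟩
  refine exists_inner_self_sub_sq_inner_sub_neg hunit ?_ hε
  rw [hcoeff]
  positivity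

/-- Let (eⱼ)_{j≥1} be an orthonormal basis of a separable Hilbert space and
a = ∑_{j≥1} 2^{-j/2} eⱼ. Then Id - a⊗a ≥ 0, but for every n and ε > 0 the operator
Id - a⊗a - ε eₙ⊗eₙ is not positive semidefinite. -/
theorem stmt7 {H : Type*} [NormedAddCommGroup H] [InnerProductSpace ℝ H]
    [CompleteSpace H] (e : HilbertBasis ℕ ℝ H)
    (a : H) (ha : a = ∑' j : ℕ, ((2 : ℝ) ^ (-((j : ℝ) + 1) / 2)) • e j) :
    (∀ x : H, 0 ≤ ⟪x, x⟫_ℝ - ⟪a, x⟫_ℝ ^ 2) ∧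
    ∀ (n : ℕ) (ε : ℝ), 0 < ε →
      ∃ x : H, ⟪x, x⟫_ℝ - ⟪a, x⟫_ℝ ^ 2 - ε * ⟪e n, x⟫_ℝ ^ 2 < 0 :=
  stmt7_general e a ha
end

section
/- Let H be a Hilbert space, let C, A be compact self-adjoint operators with C ≥ 0, C + A ≥ 0, Ker(C) finite-dimensional with orthogonal projection P onto Ker(C), and set C₁ := C + P. Assume C₁^{-1/2} A C₁^{-1/2} extends to a compact operator on H. Then there exist finitely many vectors v₁,…,v_{l₀} ∈ H such that for any u ∈ H with ⟨u, vⱼ⟩ = 0 for all j, there is ε > 0 with C + A - ε (C₁^{1/2}u)⊗(C₁^{1/2}u) ≥ 0. -/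
/-!
Write `A = S T S` with `S² = C + P`. The operator `K = S P S - T` is compact (`P` has finite
rank), and `S (1 - K) S = C + A` because `C P = P C = 0`. Positivity of `C + A` transfers to
`1 - K`, because `S` is injective (as `C + P` is) and self-adjoint, hence has dense range.

For `1 - K ≥ 0` with `K` compact, the kernel `N` of `1 - K` is an eigenspace of `K` for the
eigenvalue `1`, hence finite-dimensional. On `Nᗮ`, where `K` has no eigenvalue `1`, the Fredholm
alternative makes `1 - K` bounded below, and Cauchy–Schwarz for the form `⟪·, (1 - K) ·⟫` turns
this into `δ ‖y‖² ≤ ⟪y, (1 - K) y⟫`. Take for the `vⱼ` a spanning family of `N`: if `u ⊥ N`, then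
`ε ⟪u, y⟫² ≤ ⟪y, (1 - K) y⟫` for all `y`, and `y = S x` gives the claim.
-/

open scoped InnerProductSpace
open Module End

section
variable {𝕜 H : Type*} [RCLike 𝕜] [NormedAddCommGroup H] [InnerProductSpace 𝕜 H]

theorem Submodule.exists_fin_forall_inner_eq_zero_iff_mem_orthogonal (N : Submodule 𝕜 H)
    [FiniteDimensional 𝕜 N] :
    ∃ (l : ℕ) (v : Fin l → H), ∀ u : H, (∀ j, ⟪u, v j⟫_𝕜 = 0) ↔ u ∈ Nᗮ := by
  obtain ⟨l, v, hv⟩ :=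
    Submodule.fg_iff_exists_fin_generating_family.mp (Module.Finite.iff_fg.mp ‹_›)
  refine ⟨l, v, fun u => ?_⟩
  rw [← hv, ← Submodule.span_singleton_le_iff_mem, ← Submodule.isOrtho_iff_le,
    Submodule.isOrtho_span]
  simp

theorem IsSelfAdjoint.denseRange_of_injective [CompleteSpace H] {S : H →L[𝕜] H}
    (hS : IsSelfAdjoint S) (hinj : Function.Injective S) : DenseRange S := by
  have h : Dense (LinearMap.range (S : H →ₗ[𝕜] H) : Set H) := by
    rw [Submodule.dense_iff_topologicalClosure_eq_top, Submodule.topologicalClosure_eq_top_iff,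
      ContinuousLinearMap.orthogonal_range, hS.adjoint_eq, LinearMap.ker_eq_bot]
    exact hinj
  rwa [LinearMap.coe_range, ContinuousLinearMap.coe_coe] at h

theorem IsCompactOperator.of_range_le_finiteDimensional {E F : Type*} [NormedAddCommGroup E]
    [NormedSpace 𝕜 E] [NormedAddCommGroup F] [NormedSpace 𝕜 F] {P : E →L[𝕜] F}
    {V : Submodule 𝕜 F} [FiniteDimensional 𝕜 V] (hPV : LinearMap.range (P : E →ₗ[𝕜] F) ≤ V) :
    IsCompactOperator P :=
  (isCompactOperator_of_locallyCompactSpace_dom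
    (P.codRestrict V fun x => hPV (LinearMap.mem_range_self _ x))).clm_comp V.subtypeL

end

section
variable {H : Type*} [NormedAddCommGroup H] [InnerProductSpace ℝ H]

namespace ContinuousLinearMap.IsPositive

variable {B : H →L[ℝ] H}

theorem inner_apply_sq_le (hB : B.IsPositive) (x y : H) :
    ⟪x, B y⟫_ℝ ^ 2 ≤ ⟪x, B x⟫_ℝ * ⟪y, B y⟫_ℝ := by
  have hquad (t : ℝ) :
      0 ≤ ⟪y, B y⟫_ℝ * (t * t) + 2 * ⟪x, B y⟫_ℝ * t + ⟪x, B x⟫_ℝ := by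
    have hxt := hB.inner_nonneg_right (x + t • y)
    have hsym : ⟪y, B x⟫_ℝ = ⟪x, B y⟫_ℝ := by
      rw [← hB.inner_left_eq_inner_right, real_inner_comm]
    simp only [map_add, map_smul, inner_add_left, inner_add_right, real_inner_smul_left,
      real_inner_smul_right, hsym] at hxt
    linarith
  have hdisc := discrim_le_zero hquad
  rw [discrim] at hdisc
  linarith

theorem norm_apply_sq_le_s8 (hB : B.IsPositive) (y : H) :
    ‖B y‖ ^ 2 ≤ ‖B‖ * ⟪y, B y⟫_ℝ := by
  have hcs := hB.inner_apply_sq_le (B y) y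
  have hle : ⟪B y, B (B y)⟫_ℝ ≤ ‖B‖ * ‖B y‖ ^ 2 :=
    calc ⟪B y, B (B y)⟫_ℝ ≤ ‖B y‖ * ‖B (B y)‖ := real_inner_le_norm _ _
      _ ≤ ‖B y‖ * (‖B‖ * ‖B y‖) := by gcongr; exact B.le_opNorm _
      _ = ‖B‖ * ‖B y‖ ^ 2 := by ring
  rw [real_inner_self_eq_norm_sq] at hcs
  rcases (sq_nonneg ‖B y‖).eq_or_lt with h | h
  · rw [← h]; exact mul_nonneg (norm_nonneg _) (hB.inner_nonneg_right y)
  · nlinarith [hB.inner_nonneg_right y]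

variable [CompleteSpace H]

theorem exists_pos_mul_norm_sq_le_inner_of_mem_orthogonal_eigenspace
    {K : H →L[ℝ] H} (hK : IsCompactOperator K) (hB : (1 - K).IsPositive) :
    ∃ δ : ℝ, 0 < δ ∧
      ∀ y ∈ (eigenspace (K : End ℝ H) 1)ᗮ, δ * ‖y‖ ^ 2 ≤ ⟪y, (1 - K) y⟫_ℝ := by
  set V := (eigenspace (K : End ℝ H) 1)ᗮ
  have hKsym : (K : H →ₗ[ℝ] H).IsSymmetric := by
    intro x y
    have := hB.isSymmetric x y
    simpa [inner_sub_left, inner_sub_right, real_inner_comm x y] using this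
  have hV : ∀ v ∈ V, K v ∈ V := hKsym.invariant_orthogonalComplement_eigenspace 1
  have hKV : IsCompactOperator (K.restrict hV) := hK.restrict' hV
  have hno : ¬ HasEigenvalue ((K.restrict hV : V →L[ℝ] V) : End ℝ V) 1 := by
    rw [hasEigenvalue_iff, not_not, ContinuousLinearMap.toLinearMap_restrict]
    exact eigenspace_restrict_eq_bot hV (Submodule.orthogonal_disjoint _)
  obtain ⟨c, hc⟩ := hKV.antilipschitz_of_not_hasEigenvalue one_ne_zero hno
  refine ⟨(c ^ 2 * ‖1 - K‖ + 1)⁻¹, by positivity, fun y hy => ?_⟩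
  have hbound : ‖y‖ ≤ c * ‖(1 - K) y‖ := by
    have := (K.restrict hV - (1 : ℝ) • 1).bound_of_antilipschitz hc ⟨y, hy⟩
    simpa [norm_sub_rev (K y)] using this
  have hq := hB.inner_nonneg_right y
  calc (c ^ 2 * ‖1 - K‖ + 1)⁻¹ * ‖y‖ ^ 2
      ≤ (c ^ 2 * ‖1 - K‖ + 1)⁻¹ * (c ^ 2 * (‖1 - K‖ * ⟪y, (1 - K) y⟫_ℝ)) := by
        gcongr
        calc ‖y‖ ^ 2 ≤ (c * ‖(1 - K) y‖) ^ 2 := by gcongr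
          _ = c ^ 2 * ‖(1 - K) y‖ ^ 2 := by ring
          _ ≤ c ^ 2 * (‖1 - K‖ * ⟪y, (1 - K) y⟫_ℝ) := by
            gcongr; exact hB.norm_apply_sq_le_s8 y
    _ ≤ ⟪y, (1 - K) y⟫_ℝ := by
        rw [inv_mul_le_iff₀ (by positivity)]
        nlinarith [norm_nonneg (1 - K)]

theorem exists_fin_forall_inner_eq_zero_imp_mul_inner_sq_le
    {K : H →L[ℝ] H} (hK : IsCompactOperator K) (hB : (1 - K).IsPositive) :
    ∃ (l₀ : ℕ) (v : Fin l₀ → H), ∀ u : H, (∀ j, ⟪u, v j⟫_ℝ = 0) →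
      ∃ ε : ℝ, 0 < ε ∧ ∀ y : H, ε * ⟪u, y⟫_ℝ ^ 2 ≤ ⟪y, (1 - K) y⟫_ℝ := by
  set N := eigenspace (K : End ℝ H) 1
  have : FiniteDimensional ℝ N := K.finite_dimensional_eigenspace hK 1 one_ne_zero
  obtain ⟨δ, hδ, hcoer⟩ := hB.exists_pos_mul_norm_sq_le_inner_of_mem_orthogonal_eigenspace hK
  obtain ⟨l₀, v, hv⟩ := N.exists_fin_forall_inner_eq_zero_iff_mem_orthogonal
  refine ⟨l₀, v, fun u hu => ⟨δ / (‖u‖ ^ 2 + 1), by positivity, fun y => ?_⟩⟩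
  have huN : u ∈ Nᗮ := (hv u).mp hu
  obtain ⟨p, hp, z, hz, rfl⟩ := N.exists_add_mem_mem_orthogonal y
  have hBp : (1 - K) p = 0 := by
    rw [mem_eigenspace_iff, one_smul, ContinuousLinearMap.coe_coe] at hp
    simp [hp]
  have hquad : ⟪p + z, (1 - K) (p + z)⟫_ℝ = ⟪z, (1 - K) z⟫_ℝ := by
    rw [map_add, hBp, zero_add, inner_add_left, ← hB.inner_left_eq_inner_right, hBp,
      inner_zero_left, zero_add]
  have hinner : ⟪u, p + z⟫_ℝ = ⟪u, z⟫_ℝ := by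
    rw [inner_add_right, Submodule.inner_left_of_mem_orthogonal hp huN, zero_add]
  have hcs : ⟪u, z⟫_ℝ ^ 2 ≤ ‖u‖ ^ 2 * ‖z‖ ^ 2 := by
    rw [← mul_pow, ← sq_abs]
    gcongr
    exact abs_real_inner_le_norm u z
  rw [hquad, hinner]
  calc δ / (‖u‖ ^ 2 + 1) * ⟪u, z⟫_ℝ ^ 2
      ≤ δ / (‖u‖ ^ 2 + 1) * (‖u‖ ^ 2 * ‖z‖ ^ 2) := by gcongr
    _ ≤ δ * ‖z‖ ^ 2 := by
      rw [div_mul_eq_mul_div, div_le_iff₀ (by positivity)]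
      nlinarith [sq_nonneg ‖z‖]
    _ ≤ ⟪z, (1 - K) z⟫_ℝ := hcoer z hz

end ContinuousLinearMap.IsPositive

variable [CompleteSpace H]

theorem ContinuousLinearMap.isPositive_of_denseRange {B S : H →L[ℝ] H}
    (hB : IsSelfAdjoint B) (hS : DenseRange S) (hBS : ∀ x, 0 ≤ ⟪S x, B (S x)⟫_ℝ) :
    B.IsPositive := by
  refine (B.isPositive_iff').mpr ⟨hB, fun y => ?_⟩
  refine hS.induction_on (p := fun y => 0 ≤ ⟪B y, y⟫_ℝ) y
    (isClosed_le continuous_const (B.continuous.inner continuous_id)) fun x => ?_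
  rw [real_inner_comm]
  exact hBS x

theorem ContinuousLinearMap.injective_add_of_ker_le_range {C P : H →L[ℝ] H}
    (hC : ∀ x, 0 ≤ ⟪x, C x⟫_ℝ) (hP : IsStarProjection P)
    (hker : LinearMap.ker (C : H →ₗ[ℝ] H) ≤ LinearMap.range (P : H →ₗ[ℝ] H)) :
    Function.Injective (C + P) := by
  have hPP (x : H) : P (P x) = P x := DFunLike.congr_fun hP.isIdempotentElem.eq x
  refine (injective_iff_map_eq_zero _).mpr fun z hz => ?_
  have hPnorm : ‖P z‖ ^ 2 = ⟪z, P z⟫_ℝ := by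
    have hPsym : ⟪P z, P z⟫_ℝ = ⟪z, P (P z)⟫_ℝ := hP.isSelfAdjoint.isSymmetric z (P z)
    rw [← real_inner_self_eq_norm_sq, hPsym, hPP]
  have hsum : ⟪z, C z⟫_ℝ + ‖P z‖ ^ 2 = 0 := by
    rw [hPnorm, ← inner_add_right, ← add_apply, hz, inner_zero_right]
  have hPz : P z = 0 := by
    have := hC z
    rw [← norm_eq_zero]
    nlinarith [norm_nonneg (P z)]
  obtain ⟨w, rfl⟩ := hker (show C z = 0 by simpa [hPz] using hz)
  rwa [ContinuousLinearMap.coe_coe, hPP] at hPz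

end

theorem mul_one_sub_mul_eq_add {R : Type*} [Ring R] [StarRing R] {c p s : R} (t : R)
    (hc : IsSelfAdjoint c) (hp : IsStarProjection p) (hcp : c * p = 0) (hs : s * s = c + p) :
    s * (1 - (s * p * s - t)) * s = c + s * (t * s) := by
  have hpc : p * c = 0 := by
    simpa [hc.star_eq, hp.isSelfAdjoint.star_eq] using congrArg star hcp
  calc s * (1 - (s * p * s - t)) * s = s * s + s * (t * s) - (s * s) * p * (s * s) := by
        noncomm_ring
    _ = c + p + s * (t * s) - p := by
        rw [hs, add_mul, hcp, hp.isIdempotentElem.eq, zero_add, mul_add, hpc,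
          hp.isIdempotentElem.eq, zero_add]
    _ = c + s * (t * s) := by abel

theorem stmt8_general {H : Type*} [NormedAddCommGroup H] [InnerProductSpace ℝ H]
    [CompleteSpace H]
    (C A P S : H →L[ℝ] H)
    (hCsa : IsSelfAdjoint C)
    (hCpos : ∀ x : H, 0 ≤ ⟪x, C x⟫_ℝ)
    (hCApos : ∀ x : H, 0 ≤ ⟪x, C x⟫_ℝ + ⟪x, A x⟫_ℝ)
    (hker : FiniteDimensional ℝ (LinearMap.ker (C : H →ₗ[ℝ] H)))
    (hPsa : IsSelfAdjoint P) (hPproj : P ∘L P = P)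
    (hPrange : LinearMap.range (P : H →ₗ[ℝ] H) = LinearMap.ker (C : H →ₗ[ℝ] H))
    (hSsa : IsSelfAdjoint S)
    (hSsq : S ∘L S = C + P)
    (hcomp : ∃ T : H →L[ℝ] H, IsCompactOperator T ∧ IsSelfAdjoint T ∧
      S ∘L T ∘L S = A) :
    ∃ (l₀ : ℕ) (v : Fin l₀ → H), ∀ u : H, (∀ j, ⟪u, v j⟫_ℝ = 0) →
      ∃ ε : ℝ, 0 < ε ∧
        ∀ x : H, 0 ≤ ⟪x, C x⟫_ℝ + ⟪x, A x⟫_ℝ - ε * ⟪S u, x⟫_ℝ ^ 2 := by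
  obtain ⟨T, hTc, hTsa, hSTS⟩ := hcomp
  have hP : IsStarProjection P := ⟨hPproj, hPsa⟩
  have hCP : C * P = 0 := by
    ext x
    exact hPrange.le (LinearMap.mem_range_self _ x)
  have hSKS : S * (1 - (S * P * S - T)) * S = C + A :=
    hSTS ▸ mul_one_sub_mul_eq_add T hCsa hP hCP hSsq
  set K := S * P * S - T
  have hK : IsCompactOperator K :=
    (((IsCompactOperator.of_range_le_finiteDimensional hPrange.le).comp_clm S).clm_comp S).sub hTc
  have hSsym (x y : H) : ⟪S x, y⟫_ℝ = ⟪x, S y⟫_ℝ := hSsa.isSymmetric x y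
  have hquad (x : H) : ⟪S x, (1 - K) (S x)⟫_ℝ = ⟪x, C x⟫_ℝ + ⟪x, A x⟫_ℝ := by
    rw [hSsym, ← inner_add_right, ← add_apply, ← hSKS]
    rfl
  have hSinj : Function.Injective S := by
    refine Function.Injective.of_comp (f := S) ?_
    rw [← ContinuousLinearMap.coe_comp, hSsq]
    exact ContinuousLinearMap.injective_add_of_ker_le_range hCpos hP hPrange.ge
  have hB : (1 - K).IsPositive :=
    ContinuousLinearMap.isPositive_of_denseRange
      ((IsSelfAdjoint.one _).sub ((hPsa.conjugate_self hSsa).sub hTsa))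
      (hSsa.denseRange_of_injective hSinj) fun x => hquad x ▸ hCApos x
  obtain ⟨l₀, v, hv⟩ := hB.exists_fin_forall_inner_eq_zero_imp_mul_inner_sq_le hK
  refine ⟨l₀, v, fun u hu => ?_⟩
  obtain ⟨ε, hε, hεle⟩ := hv u hu
  refine ⟨ε, hε, fun x => ?_⟩
  have := hεle (S x)
  rw [hquad, ← hSsym] at this
  linarith

/-- Rank-one perturbation criterion for C + A: given compact self-adjoint C, A with
C ≥ 0, C + A ≥ 0, finite-dimensional Ker C with orthogonal projection P, C₁ = C + P,
square root S of C₁, and assuming C₁^{-1/2} A C₁^{-1/2} extends to a compact operator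
(i.e. A = S T S for some compact self-adjoint T), there exist v₁,…,v_{l₀} ∈ H such that
whenever ⟨u, vⱼ⟩ = 0 for all j, one has C + A - ε (C₁^{1/2}u)⊗(C₁^{1/2}u) ≥ 0 for some
ε > 0. -/
theorem stmt8 {H : Type*} [NormedAddCommGroup H] [InnerProductSpace ℝ H]
    [CompleteSpace H]
    (C A P S : H →L[ℝ] H)
    (hCc : IsCompactOperator C) (hAc : IsCompactOperator A)
    (hCsa : IsSelfAdjoint C) (hAsa : IsSelfAdjoint A)
    (hCpos : ∀ x : H, 0 ≤ ⟪x, C x⟫_ℝ)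
    (hCApos : ∀ x : H, 0 ≤ ⟪x, C x⟫_ℝ + ⟪x, A x⟫_ℝ)
    (hker : FiniteDimensional ℝ (LinearMap.ker (C : H →ₗ[ℝ] H)))
    (hPsa : IsSelfAdjoint P) (hPproj : P ∘L P = P)
    (hPrange : LinearMap.range (P : H →ₗ[ℝ] H) = LinearMap.ker (C : H →ₗ[ℝ] H))
    (hSsa : IsSelfAdjoint S) (hSpos : ∀ x : H, 0 ≤ ⟪x, S x⟫_ℝ)
    (hSsq : S ∘L S = C + P)
    (hcomp : ∃ T : H →L[ℝ] H, IsCompactOperator T ∧ IsSelfAdjoint T ∧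
      S ∘L T ∘L S = A) :
    ∃ (l₀ : ℕ) (v : Fin l₀ → H), ∀ u : H, (∀ j, ⟪u, v j⟫_ℝ = 0) →
      ∃ ε : ℝ, 0 < ε ∧
        ∀ x : H, 0 ≤ ⟪x, C x⟫_ℝ + ⟪x, A x⟫_ℝ - ε * ⟪S u, x⟫_ℝ ^ 2 :=
  stmt8_general C A P S hCsa hCpos hCApos hker hPsa hPproj hPrange hSsa hSsq hcomp
end

section
/- Let ψ₁,…,ψ_l ∈ L²(𝕋) and let θ₀ ∈ [0,2π). Then there exists a trigonometric polynomial f (i.e. a finite real linear combination of 1, sin(nθ), cos(nθ)) such that f(θ₀) ≠ 0 and ⟨f, ψⱼ⟩_{L²(𝕋)} = 0 for all j = 1,…,l. -/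
/-!
Evaluation at `θ₀` and the functionals `f ↦ ⟨f, ψⱼ⟩` are linear forms on trigonometric
polynomials. If every polynomial orthogonal to all `ψⱼ` vanished at `θ₀`, evaluation at `θ₀` would
be a linear combination of these finitely many forms, so some `Ψ = ∑ αⱼ ψⱼ` would satisfy
`∫ cos (n (θ - θ₀)) Ψ(θ) dθ = cos 0 = 1` for every `n`. This contradicts the Riemann–Lebesgue lemma.
-/

open MeasureTheory Filter Topology Real FourierTransform Finset

theorem MeasureTheory.Integrable.cos_mul_sub {f : ℝ → ℝ} (hf : Integrable f) (a c : ℝ) :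
    Integrable (fun x => cos (a * (x - c)) * f x) :=
  hf.bdd_mul (c := 1) (by fun_prop) (.of_forall fun x => by simpa using abs_cos_le_one _)

theorem tendsto_integral_cos_mul_atTop {f : ℝ → ℝ} (hf : Integrable f) :
    Tendsto (fun t : ℝ => ∫ x, cos (t * x) * f x) atTop (𝓝 0) := by
  have hRL := (Real.tendsto_integral_exp_smul_cocompact fun x => (f x : ℂ)).comp
    ((tendsto_id.atTop_div_const (by positivity : 0 < 2 * π)).mono_right atTop_le_cocompact)
  refine squeeze_zero_norm (fun t => ?_) (by simpa using hRL.norm)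
  -- `𝐞 (-(x * (t / (2 * π)))) = exp (-i t x)`, whose real part is `cos (t x)`
  have hre : ∫ x, cos (t * x) * f x = (∫ x, 𝐞 (-(x * (t / (2 * π)))) • (f x : ℂ)).re := by
    rw [← RCLike.re_to_complex, ← integral_re
      ((Real.fourierIntegral_convergent_iff' (ContinuousLinearMap.mul ℝ ℝ) _).2 hf.ofReal)]
    congr 1 with x
    rw [Circle.smul_def, Real.fourierChar_apply, smul_eq_mul, RCLike.re_to_complex,
      Complex.re_mul_ofReal, Complex.exp_ofReal_mul_I_re, mul_neg, cos_neg]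
    congr 2
    field_simp
  rw [hre]
  exact Complex.abs_re_le_norm _

theorem tendsto_integral_cos_mul_sub_atTop {f : ℝ → ℝ} (hf : Integrable f) (c : ℝ) :
    Tendsto (fun t : ℝ => ∫ x, cos (t * (x - c)) * f x) atTop (𝓝 0) := by
  refine (tendsto_integral_cos_mul_atTop (hf.comp_add_right c)).congr fun t => ?_
  rw [← integral_add_right_eq_self (fun x => cos (t * (x - c)) * f x) c]
  simp only [add_sub_cancel_right]

theorem Module.Dual.exists_forall_eq_zero_and_ne_zero_of_notMem_span {K V ι : Type*} [Field K]
    [AddCommGroup V] [Module K V] [Finite ι] {L : ι → Module.Dual K V} {φ : Module.Dual K V}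
    (h : φ ∉ Submodule.span K (Set.range L)) : ∃ v, (∀ i, L i v = 0) ∧ φ v ≠ 0 := by
  by_contra! H
  exact h (mem_span_of_iInf_ker_le_ker fun v hv => H v (by simpa using hv))

/-- The linear form `c ↦ ∫ (∑ₙ cₙ cos (n (x - θ₀))) f x dx` (see `cosMoments_apply`), written
through the moments of `f` so that it is linear without integrability assumptions. -/
noncomputable def cosMoments (θ₀ : ℝ) (f : ℝ → ℝ) : Module.Dual ℝ (ℕ →₀ ℝ) :=
  Finsupp.linearCombination ℝ fun n : ℕ => ∫ x, cos (n * (x - θ₀)) * f x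

theorem cosMoments_apply {f : ℝ → ℝ} (hf : Integrable f) (θ₀ : ℝ) (c : ℕ →₀ ℝ) :
    cosMoments θ₀ f c = ∫ x, (c.sum fun n cₙ => cₙ * cos (n * (x - θ₀))) * f x := by
  simp only [cosMoments, Finsupp.linearCombination_apply, Finsupp.sum, Finset.sum_mul, mul_assoc]
  rw [integral_finsetSum _ fun (n : ℕ) _ => (hf.cos_mul_sub n θ₀).const_mul (c n)]
  simp only [smul_eq_mul, integral_const_mul]

theorem linearCombination_one_notMem_span_cosMoments {ι : Type*} [Fintype ι] {ψ : ι → ℝ → ℝ}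
    (hψ : ∀ j, Integrable (ψ j)) (θ₀ : ℝ) :
    Finsupp.linearCombination ℝ (fun _ => (1 : ℝ)) ∉
      Submodule.span ℝ (Set.range fun j => cosMoments θ₀ (ψ j)) := by
  intro h
  obtain ⟨α, hα⟩ := (Submodule.mem_span_range_iff_exists_fun ℝ).1 h
  have hΨ : Integrable fun x => ∑ j, α j * ψ j x :=
    integrable_finsetSum _ fun j _ => (hψ j).const_mul (α j)
  have hmoment (n : ℕ) : ∫ x, cos (n * (x - θ₀)) * ∑ j, α j * ψ j x = 1 := by
    have := LinearMap.congr_fun hα (Finsupp.single n 1)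
    simp only [LinearMap.sum_apply, LinearMap.smul_apply, cosMoments,
      Finsupp.linearCombination_single, smul_eq_mul, one_mul, ← integral_const_mul] at this
    rw [← this, ← integral_finsetSum _ fun j _ => ((hψ j).cos_mul_sub n θ₀).const_mul (α j)]
    congr 1 with x
    rw [Finset.mul_sum]
    exact Finset.sum_congr rfl fun j _ => by ring
  have := (tendsto_integral_cos_mul_sub_atTop hΨ θ₀).comp tendsto_natCast_atTop_atTop
  simp only [Function.comp_def, hmoment] at this
  exact one_ne_zero (tendsto_nhds_unique tendsto_const_nhds this)

theorem exists_finsupp_sum_ne_zero_and_integral_cos_sub_mul_eq_zero {ι : Type*} [Fintype ι]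
    {ψ : ι → ℝ → ℝ} (hψ : ∀ j, Integrable (ψ j)) (θ₀ : ℝ) :
    ∃ c : ℕ →₀ ℝ, (c.sum fun _ cₙ => cₙ) ≠ 0 ∧
      ∀ j, ∫ x, (c.sum fun n cₙ => cₙ * cos (n * (x - θ₀))) * ψ j x = 0 := by
  obtain ⟨c, hc, hc1⟩ := Module.Dual.exists_forall_eq_zero_and_ne_zero_of_notMem_span
    (linearCombination_one_notMem_span_cosMoments hψ θ₀)
  refine ⟨c, by simpa [Finsupp.linearCombination_apply] using hc1, fun j => ?_⟩
  rw [← cosMoments_apply (hψ j)]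
  exact hc j

theorem Finsupp.sum_mul_cos_sub_eq_add_sum_Icc {c : ℕ →₀ ℝ} {N : ℕ} (hN : c.support ⊆ range (N + 1))
    (θ₀ θ : ℝ) :
    (c.sum fun n cₙ => cₙ * cos (n * (θ - θ₀))) =
      c 0 + ∑ n ∈ Icc 1 N,
        (c n * cos (n * θ₀) * cos (n * θ) + c n * sin (n * θ₀) * sin (n * θ)) := by
  rw [c.sum_of_support_subset hN (fun n cₙ => cₙ * cos (n * (θ - θ₀))) fun _ _ => zero_mul _,
    range_eq_Ico, sum_eq_sum_Ico_succ_bot N.succ_pos]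
  simp only [Nat.cast_zero, zero_mul, cos_zero, mul_one]
  congr 1
  refine Finset.sum_congr rfl fun n _ => ?_
  rw [mul_sub, cos_sub]
  ring

theorem stmt10_general (l : ℕ) (ψ : Fin l → ℝ → ℝ)
    (hψ : ∀ j, MemLp (ψ j) 2 (volume.restrict (Set.Ioc (0 : ℝ) (2 * Real.pi))))
    (θ₀ : ℝ) :
    ∃ (N : ℕ) (a b : ℕ → ℝ),
      (fun θ : ℝ => a 0 + ∑ n ∈ Finset.Icc 1 N,
          (a n * Real.cos (n * θ) + b n * Real.sin (n * θ))) θ₀ ≠ 0 ∧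
      ∀ j, ∫ θ in (0 : ℝ)..(2 * Real.pi),
          (a 0 + ∑ n ∈ Finset.Icc 1 N,
            (a n * Real.cos (n * θ) + b n * Real.sin (n * θ))) * ψ j θ = 0 := by
  have hψ_ind (j : Fin l) : Integrable ((Set.Ioc 0 (2 * π)).indicator (ψ j)) :=
    (integrable_indicator_iff measurableSet_Ioc).2 ((hψ j).integrable one_le_two)
  obtain ⟨c, hc1, hcψ⟩ := exists_finsupp_sum_ne_zero_and_integral_cos_sub_mul_eq_zero hψ_ind θ₀
  obtain ⟨N, hN⟩ := c.support.exists_nat_subset_range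
  have hpoly := Finsupp.sum_mul_cos_sub_eq_add_sum_Icc (hN.trans (range_mono N.le_succ)) θ₀
  refine ⟨N, fun n => c n * cos (n * θ₀), fun n => c n * sin (n * θ₀), ?_, fun j => ?_⟩
  · convert hc1 using 1
    simpa using (hpoly θ₀).symm
  · rw [intervalIntegral.integral_of_le two_pi_pos.le, ← integral_indicator measurableSet_Ioc]
    refine (integral_congr_ae (.of_forall fun θ => ?_)).trans (hcψ j)
    rw [Set.indicator_mul_right, hpoly]
    simp

/-- Given ψ₁,…,ψ_l ∈ L²(𝕋) and θ₀, there is a trigonometric polynomial f with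
f(θ₀) ≠ 0 and ⟨f, ψⱼ⟩_{L²} = 0 for all j. -/
theorem stmt10 (l : ℕ) (ψ : Fin l → ℝ → ℝ)
    (hψ : ∀ j, MemLp (ψ j) 2 (volume.restrict (Set.Ioc (0 : ℝ) (2 * Real.pi))))
    (θ₀ : ℝ) (hθ₀ : θ₀ ∈ Set.Ico 0 (2 * Real.pi)) :
    ∃ (N : ℕ) (a b : ℕ → ℝ),
      (fun θ : ℝ => a 0 + ∑ n ∈ Finset.Icc 1 N,
          (a n * Real.cos (n * θ) + b n * Real.sin (n * θ))) θ₀ ≠ 0 ∧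
      ∀ j, ∫ θ in (0 : ℝ)..(2 * Real.pi),
          (a 0 + ∑ n ∈ Finset.Icc 1 N,
            (a n * Real.cos (n * θ) + b n * Real.sin (n * θ))) * ψ j θ = 0 :=
  stmt10_general l ψ hψ θ₀
end

section
/- Let u : ℝ² → ℝ be positive, smooth, convex, with Δu ≥ κu for some κ > 0 and |∇u| ≤ Ku for some K > 0. Then there is a constant c₀ < ∞, depending only on κ, such that for every square Q ⊂ ℝ² of side length 1, ∫_Q log(1 + 4u(y)/(u(y)-1)²) dy ≤ c₀. -/
set_option maxHeartbeats 1000000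

open MeasureTheory Set Real

noncomputable section

namespace Stmt14Aux

abbrev E2 := EuclideanSpace ℝ (Fin 2)

/-- Second directional derivative. -/
def D2 (u : E2 → ℝ) (y v : E2) : ℝ := fderiv ℝ (fun z => fderiv ℝ u z v) y v

lemma hasDerivAt_line {f : E2 → ℝ} (hf : Differentiable ℝ f) (y v : E2) (t : ℝ) :
    HasDerivAt (fun s => f (y + s • v)) (fderiv ℝ f (y + t • v) v) t := by
  have h1 : HasDerivAt (fun s : ℝ => y + s • v) v t := by
    simpa using ((hasDerivAt_id t).smul_const v).const_add y
  exact (hf _).hasFDerivAt.comp_hasDerivAt t h1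

lemma contDiff_fderiv_apply {u : E2 → ℝ} (hu : ContDiff ℝ (⊤ : ℕ∞) u) (v : E2) :
    ContDiff ℝ (⊤ : ℕ∞) (fun z => fderiv ℝ u z v) :=
  (ContinuousLinearMap.apply ℝ ℝ v).contDiff.comp
    (hu.fderiv_right (m := (⊤ : ℕ∞)) (le_of_eq (by rfl)))

lemma deriv_line {u : E2 → ℝ} (hu : ContDiff ℝ (⊤ : ℕ∞) u) (y v : E2) :
    deriv (fun s : ℝ => u (y + s • v)) = fun t => fderiv ℝ u (y + t • v) v := by
  funext t
  exact (hasDerivAt_line (hu.differentiable (by simp)) y v t).deriv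

lemma deriv2_line {u : E2 → ℝ} (hu : ContDiff ℝ (⊤ : ℕ∞) u) (y v : E2) (t : ℝ) :
    deriv (deriv (fun s : ℝ => u (y + s • v))) t = D2 u (y + t • v) v := by
  rw [deriv_line hu]
  exact (hasDerivAt_line ((contDiff_fderiv_apply hu v).differentiable
    (by simp)) y v t).deriv

lemma iteratedDeriv_two_line {u : E2 → ℝ} (hu : ContDiff ℝ (⊤ : ℕ∞) u) (y v : E2) :
    iteratedDeriv 2 (fun s : ℝ => u (y + s • v)) 0 = D2 u y v := by
  have h : iteratedDeriv 2 (fun s : ℝ => u (y + s • v))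
      = deriv (deriv (fun s : ℝ => u (y + s • v))) := by
    rw [iteratedDeriv_succ, iteratedDeriv_one]
  rw [h, deriv2_line hu]
  norm_num

lemma continuous_D2 {u : E2 → ℝ} (hu : ContDiff ℝ (⊤ : ℕ∞) u) (v : E2) :
    Continuous fun y => D2 u y v := by
  have h : Continuous (fderiv ℝ (fun z => fderiv ℝ u z v)) :=
    ((contDiff_fderiv_apply hu v).fderiv_right (m := 0) (by exact_mod_cast le_top)).continuous
  exact (ContinuousLinearMap.apply ℝ ℝ v).continuous.comp h

lemma contDiff_slice {u : E2 → ℝ} (hu : ContDiff ℝ (⊤ : ℕ∞) u) (y v : E2) :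
    ContDiff ℝ (⊤ : ℕ∞) (fun s : ℝ => u (y + s • v)) :=
  hu.comp (contDiff_const.add (contDiff_id.smul contDiff_const))

lemma convexOn_slice {u : E2 → ℝ} (hc : ConvexOn ℝ univ u) (y v : E2) :
    ConvexOn ℝ univ (fun s : ℝ => u (y + s • v)) := by
  have h := hc.comp_affineMap (AffineMap.lineMap y (y + v) : ℝ →ᵃ[ℝ] E2)
  have he : (fun s : ℝ => u (y + s • v))
      = u ∘ (AffineMap.lineMap y (y + v) : ℝ →ᵃ[ℝ] E2) := by
    funext s
    simp only [AffineMap.lineMap_apply_module, Function.comp_apply]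
    congr 1
    module
  rw [he]
  simpa using h


lemma mono_deriv_nonneg {f : ℝ → ℝ} {x : ℝ} (hm : Monotone f) (hd : DifferentiableAt ℝ f x) :
    0 ≤ deriv f x := by
  have ht := hasDerivAt_iff_tendsto_slope.1 hd.hasDerivAt
  refine ge_of_tendsto ht ?_
  filter_upwards [self_mem_nhdsWithin] with z hz
  rcases lt_or_gt_of_ne (hz : z ≠ x) with h | h
  · rw [slope_def_field]
    exact div_nonneg_iff.2 (Or.inr ⟨by simpa using hm h.le, by linarith⟩)
  · rw [slope_def_field]
    exact div_nonneg (by simpa using hm h.le) (by linarith)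

/-- Core 1D estimate: on an interval where a smooth convex function stays `ε`-close to 1,
the set where its second derivative is at least `a` has measure at most `6√(ε/a)`. -/
lemma core1D {g : ℝ → ℝ} (hg : ContDiff ℝ (⊤ : ℕ∞) g) (hcvx : ConvexOn ℝ univ g)
    {a ε α β : ℝ} (ha : 0 < a) (hε : 0 < ε) (hαβ : α ≤ β)
    (hb : ∀ x ∈ Icc α β, |g x - 1| ≤ ε)
    {W : Set ℝ} (hWm : MeasurableSet W) (hW : W ⊆ Icc α β)
    (hW2 : ∀ x ∈ W, a ≤ deriv (deriv g) x) :
    volume W ≤ ENNReal.ofReal (6 * Real.sqrt (ε / a)) := by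
  set η := Real.sqrt (ε / a) with hηdef
  have hη : 0 < η := Real.sqrt_pos.2 (div_pos hε ha)
  have hη2 : a * η ^ 2 = ε := by
    rw [hηdef, Real.sq_sqrt (div_nonneg hε.le ha.le)]
    field_simp
  have hdiff : Differentiable ℝ g := hg.differentiable (by simp)
  have hd2 : Differentiable ℝ (deriv g) ∧ Continuous (deriv (deriv g)) := by
    have h1 := (contDiff_infty_iff_deriv.1 hg).2
    have h2 := contDiff_infty_iff_deriv.1 h1
    exact ⟨h2.1, h2.2.continuous⟩
  have hmono : Monotone (deriv g) := by
    have := hcvx.monotoneOn_deriv (fun x _ => hdiff.differentiableAt)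
    exact monotoneOn_univ.1 this
  have hgpp : ∀ x, 0 ≤ deriv (deriv g) x :=
    fun x => mono_deriv_nonneg hmono (hd2.1 x)
  by_cases hcase : β - α ≤ 2 * η
  · calc volume W ≤ volume (Icc α β) := measure_mono hW
      _ = ENNReal.ofReal (β - α) := Real.volume_Icc
      _ ≤ _ := ENNReal.ofReal_le_ofReal (by nlinarith)
  · push_neg at hcase
    set α' := α + η with hα'
    set β' := β - η with hβ'
    have hαα' : α < α' := by simp [hα', hη]
    have hβ'β : β' < β := by simp [hβ', hη]
    have hα'β' : α' < β' := by
      simp only [hα', hβ']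
      linarith
    have hgβ' : deriv g β' ≤ 2 * ε / η := by
      have h1 := hcvx.deriv_le_slope (mem_univ β') (mem_univ β) hβ'β hdiff.differentiableAt
      rw [slope_def_field] at h1
      have hgβ : g β ≤ 1 + ε := by
        have := hb β ⟨hαβ, le_refl β⟩
        rw [abs_le] at this
        linarith [this.2]
      have hgb' : 1 - ε ≤ g β' := by
        have := hb β' ⟨by linarith, by linarith⟩
        rw [abs_le] at this
        linarith [this.1]
      have hβη : β - β' = η := by simp [hβ']
      calc deriv g β' ≤ (g β - g β') / (β - β') := h1
        _ ≤ 2 * ε / η := by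
            rw [hβη]
            gcongr
            linarith
    have hgα' : -(2 * ε / η) ≤ deriv g α' := by
      have h1 := hcvx.slope_le_deriv (mem_univ α) (mem_univ α') hαα' hdiff.differentiableAt
      rw [slope_def_field] at h1
      have hga : |g α - 1| ≤ ε := hb α ⟨le_refl α, hαβ⟩
      have hga' : |g α' - 1| ≤ ε := hb α' ⟨by linarith, by linarith⟩
      rw [abs_le] at hga hga'
      have hαη : α' - α = η := by simp [hα']
      have h2 : -(2 * ε / η) ≤ (g α' - g α) / (α' - α) := by
        rw [hαη, neg_div']
        rw [div_le_div_iff_of_pos_right hη]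
        linarith [hga.1, hga.2, hga'.1, hga'.2]
      linarith
    have hFTC : ∫ x in α'..β', deriv (deriv g) x = deriv g β' - deriv g α' := by
      apply intervalIntegral.integral_deriv_eq_sub
      · intro x _
        exact hd2.1 x
      · exact hd2.2.intervalIntegrable _ _
    have hint1 : IntegrableOn (deriv (deriv g)) (Ioc α' β') volume :=
      hd2.2.integrableOn_Ioc
    have hindint : IntegrableOn (W.indicator (fun _ => a)) (Ioc α' β') volume :=
      (integrableOn_const measure_Ioc_lt_top.ne).indicator hWm
    have hcomp : ∫ x in Ioc α' β', W.indicator (fun _ => a) x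
        ≤ ∫ x in Ioc α' β', deriv (deriv g) x := by
      apply setIntegral_mono_on hindint hint1 measurableSet_Ioc
      intro x _
      by_cases hxW : x ∈ W
      · rw [indicator_of_mem hxW]
        exact hW2 x hxW
      · rw [indicator_of_notMem hxW]
        exact hgpp x
    have hval : ∫ x in Ioc α' β', W.indicator (fun _ => a) x
        = a * (volume (W ∩ Ioc α' β')).toReal := by
      rw [setIntegral_indicator hWm, setIntegral_const, smul_eq_mul, Set.inter_comm]
      rw [measureReal_def]
      ring
    have hIoc : ∫ x in α'..β', deriv (deriv g) x = ∫ x in Ioc α' β', deriv (deriv g) x :=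
      intervalIntegral.integral_of_le hα'β'.le
    have hup : a * (volume (W ∩ Ioc α' β')).toReal ≤ 4 * ε / η := by
      have h5 := hcomp
      rw [hval, ← hIoc, hFTC] at h5
      have h6 : 2 * ε / η + 2 * ε / η = 4 * ε / η := by ring
      linarith
    have hεη : 4 * ε / η = 4 * (a * η) := by
      rw [← hη2]
      field_simp
    have hWIoc : volume (W ∩ Ioc α' β') ≤ ENNReal.ofReal (4 * η) := by
      have hfin : volume (W ∩ Ioc α' β') ≠ ⊤ :=
        (lt_of_le_of_lt (measure_mono inter_subset_right) measure_Ioc_lt_top).ne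
      rw [← ENNReal.ofReal_toReal hfin]
      apply ENNReal.ofReal_le_ofReal
      rw [hεη] at hup
      nlinarith [ENNReal.toReal_nonneg (a := volume (W ∩ Ioc α' β'))]
    have hcover : W ⊆ (W ∩ Ioc α' β') ∪ (Icc α α' ∪ Icc β' β) := by
      intro x hx
      rcases le_or_gt x α' with h | h
      · exact Or.inr (Or.inl ⟨(hW hx).1, h⟩)
      rcases le_or_gt x β' with h2 | h2
      · exact Or.inl ⟨hx, h, h2⟩
      · exact Or.inr (Or.inr ⟨h2.le, (hW hx).2⟩)
    calc volume W ≤ volume (W ∩ Ioc α' β') + (volume (Icc α α') + volume (Icc β' β)) := by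
          refine (measure_mono hcover).trans ?_
          refine (measure_union_le _ _).trans ?_
          gcongr
          exact measure_union_le _ _
      _ ≤ ENNReal.ofReal (4 * η) + (ENNReal.ofReal η + ENNReal.ofReal η) := by
          have h1 : volume (Icc α α') ≤ ENNReal.ofReal η := by
            rw [Real.volume_Icc]
            exact ENNReal.ofReal_le_ofReal (by simp [hα'])
          have h2 : volume (Icc β' β) ≤ ENNReal.ofReal η := by
            rw [Real.volume_Icc]
            exact ENNReal.ofReal_le_ofReal (by simp [hβ'])
          exact add_le_add hWIoc (add_le_add h1 h2)
      _ ≤ ENNReal.ofReal (6 * η) := by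
          rw [← ENNReal.ofReal_add (by positivity) (by positivity),
            ← ENNReal.ofReal_add (by positivity) (by positivity)]
          exact ENNReal.ofReal_le_ofReal (by linarith)


/-- Per-line estimate: the set of points on an interval of length 1 where a smooth convex
function is `ε`-close to 1 and has second derivative at least `a` has small measure. -/
lemma line1D {g : ℝ → ℝ} (hg : ContDiff ℝ (⊤ : ℕ∞) g) (hcvx : ConvexOn ℝ univ g)
    {a ε : ℝ} (r : ℝ) (ha : 0 < a) (hε : 0 < ε) :
    volume {t | t ∈ Icc r (r + 1) ∧ a ≤ deriv (deriv g) t ∧ |g t - 1| < ε}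
      ≤ ENNReal.ofReal (12 * Real.sqrt (ε / a)) := by
  have hgc : Continuous g := hg.continuous
  have hc2 : Continuous (deriv (deriv g)) := by
    have h1 := (contDiff_infty_iff_deriv.1 hg).2
    exact (contDiff_infty_iff_deriv.1 h1).2.continuous
  set T := {t | t ∈ Icc r (r + 1) ∧ a ≤ deriv (deriv g) t ∧ |g t - 1| < ε} with hTdef
  have hTm : MeasurableSet T := by
    have h1 : MeasurableSet {t : ℝ | a ≤ deriv (deriv g) t} :=
      measurableSet_le measurable_const hc2.measurable
    have h2 : MeasurableSet {t : ℝ | |g t - 1| < ε} :=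
      measurableSet_lt ((hgc.sub continuous_const).abs).measurable measurable_const
    have heq : T = Icc r (r + 1) ∩ ({t : ℝ | a ≤ deriv (deriv g) t} ∩ {t : ℝ | |g t - 1| < ε}) := by
      ext x
      simp only [hTdef, mem_setOf_eq, mem_inter_iff]
    rw [heq]
    exact measurableSet_Icc.inter (h1.inter h2)
  have hTIcc : T ⊆ Icc r (r + 1) := fun x hx => hx.1
  have hsqrt : (0 : ℝ) ≤ 6 * Real.sqrt (ε / a) := by positivity
  have hlowcl : closure T ⊆ {z : ℝ | 1 - ε ≤ g z} := by
    apply (isClosed_le continuous_const hgc).closure_subset_iff.2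
    intro z hz
    have h1 := hz.2.2
    rw [abs_lt] at h1
    simp only [mem_setOf_eq]
    linarith [h1.1]
  -- helper: bound for subsets of T on which g stays above 1 - ε on the convex hull
  have half : ∀ S : Set ℝ, MeasurableSet S → S ⊆ T →
      (∀ x ∈ Icc (sInf S) (sSup S), 1 - ε ≤ g x) →
      volume S ≤ ENNReal.ofReal (6 * Real.sqrt (ε / a)) := by
    intro S hSm hST hlow
    rcases S.eq_empty_or_nonempty with rfl | hSne
    · simp
    have hbb : BddBelow S := ⟨r, fun x hx => (hTIcc (hST hx)).1⟩
    have hba : BddAbove S := ⟨r + 1, fun x hx => (hTIcc (hST hx)).2⟩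
    have hAB : sInf S ≤ sSup S := Real.sInf_le_sSup _ hbb hba
    have hSsub : S ⊆ Icc (sInf S) (sSup S) := fun x hx => ⟨csInf_le hbb hx, le_csSup hba hx⟩
    have hup : ∀ x ∈ Icc (sInf S) (sSup S), g x ≤ 1 + ε := by
      have hK : Convex ℝ {x : ℝ | g x ≤ 1 + ε} := by
        have := hcvx.convex_le (1 + ε)
        simpa using this
      have hKc : IsClosed {x : ℝ | g x ≤ 1 + ε} := isClosed_le hgc continuous_const
      have hSK : S ⊆ {x : ℝ | g x ≤ 1 + ε} := by
        intro x hx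
        have h1 := (hST hx).2.2
        rw [abs_lt] at h1
        simp only [mem_setOf_eq]
        linarith [h1.2]
      have hclos : closure S ⊆ {x : ℝ | g x ≤ 1 + ε} := hKc.closure_subset_iff.2 hSK
      have hA : sInf S ∈ {x : ℝ | g x ≤ 1 + ε} := hclos (csInf_mem_closure hSne hbb)
      have hB : sSup S ∈ {x : ℝ | g x ≤ 1 + ε} := hclos (csSup_mem_closure hSne hba)
      intro x hx
      exact hK.ordConnected.out hA hB hx
    refine core1D hg hcvx ha hε hAB ?_ hSm hSsub (fun x hx => (hST hx).2.1)
    intro x hx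
    rw [abs_le]
    exact ⟨by linarith [hlow x hx], by linarith [hup x hx]⟩
  -- split along the sublevel set J
  rcases T.eq_empty_or_nonempty with hTe | hTne
  · rw [hTe, measure_empty]
    exact zero_le
  set J := {x | x ∈ Icc r (r + 1) ∧ g x ≤ 1 - ε} with hJdef
  have hTJ : ∀ x ∈ T, x ∉ J := by
    intro x hx hxJ
    have h1 := hx.2.2
    rw [abs_lt] at h1
    linarith [h1.1, hxJ.2]
  rcases J.eq_empty_or_nonempty with hJe | hJne
  · -- no sublevel set: every point of [r, r+1] has g > 1 - ε
    have hlow : ∀ x ∈ Icc r (r + 1), 1 - ε ≤ g x := by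
      intro x hx
      by_contra h
      push_neg at h
      have hxJ : x ∈ J := ⟨hx, by linarith⟩
      rw [hJe] at hxJ
      exact hxJ
    have hT6 := half T hTm (subset_refl T) ?_
    · exact hT6.trans (ENNReal.ofReal_le_ofReal (by linarith))
    · intro x hx
      apply hlow
      have h1 : r ≤ sInf T := le_csInf hTne (fun z hz => (hTIcc hz).1)
      have h2 : sSup T ≤ r + 1 := csSup_le hTne (fun z hz => (hTIcc hz).2)
      exact ⟨h1.trans hx.1, hx.2.trans h2⟩
  · -- J nonempty
    have hJconv : Convex ℝ J := by
      have h1 : Convex ℝ {x : ℝ | g x ≤ 1 - ε} := by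
        have := hcvx.convex_le (1 - ε)
        simpa using this
      have heq : J = Icc r (r + 1) ∩ {x : ℝ | g x ≤ 1 - ε} := by
        ext x
        simp only [hJdef, mem_setOf_eq, mem_inter_iff]
      rw [heq]
      exact (convex_Icc _ _).inter h1
    have hJc : IsClosed J := by
      have heq : J = Icc r (r + 1) ∩ {x : ℝ | g x ≤ 1 - ε} := by
        ext x
        simp only [hJdef, mem_setOf_eq, mem_inter_iff]
      rw [heq]
      exact isClosed_Icc.inter (isClosed_le hgc continuous_const)
    have hbbJ : BddBelow J := ⟨r, fun x hx => hx.1.1⟩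
    have hbaJ : BddAbove J := ⟨r + 1, fun x hx => hx.1.2⟩
    set p := sInf J with hpdef
    set q := sSup J with hqdef
    have hpJ : p ∈ J := hJc.csInf_mem hJne hbbJ
    have hqJ : q ∈ J := hJc.csSup_mem hJne hbaJ
    have hcover : T ⊆ (T ∩ Iio p) ∪ (T ∩ Ioi q) := by
      intro x hx
      rcases lt_or_ge x p with h | h
      · exact Or.inl ⟨hx, h⟩
      rcases lt_or_ge q x with h2 | h2
      · exact Or.inr ⟨hx, h2⟩
      · exact absurd (hJconv.ordConnected.out hpJ hqJ ⟨h, h2⟩) (hTJ x hx)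
    have hTp : volume (T ∩ Iio p) ≤ ENNReal.ofReal (6 * Real.sqrt (ε / a)) := by
      rcases (T ∩ Iio p).eq_empty_or_nonempty with he | hne
      · rw [he, measure_empty]
        exact zero_le
      refine half _ (hTm.inter measurableSet_Iio) inter_subset_left ?_
      intro x hx
      have hbaS : BddAbove (T ∩ Iio p) := ⟨p, fun z hz => hz.2.le⟩
      have hsup : sSup (T ∩ Iio p) ≤ p := csSup_le hne (fun z hz => hz.2.le)
      have hxr : r ≤ x :=
        le_trans (le_csInf hne (fun z hz => (hTIcc hz.1).1)) hx.1
      rcases lt_or_ge x p with hxp | hxp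
      · have hxr1 : x ≤ r + 1 := le_trans (hx.2.trans hsup) hpJ.1.2
        by_contra hcon
        push_neg at hcon
        have hxJ : x ∈ J := ⟨⟨hxr, hxr1⟩, by linarith⟩
        linarith [csInf_le hbbJ hxJ]
      · have hxsup : x = sSup (T ∩ Iio p) :=
          le_antisymm hx.2 (hsup.trans hxp)
        have hcl : sSup (T ∩ Iio p) ∈ closure (T ∩ Iio p) := csSup_mem_closure hne hbaS
        have hmem : sSup (T ∩ Iio p) ∈ closure T :=
          closure_mono inter_subset_left hcl
        rw [hxsup]
        exact hlowcl hmem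
    have hTq : volume (T ∩ Ioi q) ≤ ENNReal.ofReal (6 * Real.sqrt (ε / a)) := by
      rcases (T ∩ Ioi q).eq_empty_or_nonempty with he | hne
      · rw [he, measure_empty]
        exact zero_le
      refine half _ (hTm.inter measurableSet_Ioi) inter_subset_left ?_
      intro x hx
      have hbbS : BddBelow (T ∩ Ioi q) := ⟨q, fun z hz => hz.2.le⟩
      have hinf : q ≤ sInf (T ∩ Ioi q) := le_csInf hne (fun z hz => hz.2.le)
      have hxr1 : x ≤ r + 1 :=
        le_trans hx.2 (csSup_le hne (fun z hz => (hTIcc hz.1).2))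
      rcases lt_or_ge q x with hqx | hqx
      · have hxr : r ≤ x := le_trans hqJ.1.1 hqx.le
        by_contra hcon
        push_neg at hcon
        have hxJ : x ∈ J := ⟨⟨hxr, hxr1⟩, by linarith⟩
        linarith [le_csSup hbaJ hxJ]
      · have hxinf : x = sInf (T ∩ Ioi q) :=
          le_antisymm (by linarith [hinf]) hx.1
        have hcl : sInf (T ∩ Ioi q) ∈ closure (T ∩ Ioi q) := csInf_mem_closure hne hbbS
        have hmem : sInf (T ∩ Ioi q) ∈ closure T :=
          closure_mono inter_subset_left hcl
        rw [hxinf]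
        exact hlowcl hmem
    calc volume T ≤ volume ((T ∩ Iio p) ∪ (T ∩ Ioi q)) := measure_mono hcover
      _ ≤ volume (T ∩ Iio p) + volume (T ∩ Ioi q) := measure_union_le _ _
      _ ≤ ENNReal.ofReal (6 * Real.sqrt (ε / a)) + ENNReal.ofReal (6 * Real.sqrt (ε / a)) :=
          add_le_add hTp hTq
      _ = ENNReal.ofReal (12 * Real.sqrt (ε / a)) := by
          rw [← ENNReal.ofReal_add hsqrt hsqrt]
          ring_nf


/-- Coordinates-to-Euclidean map. -/
def Fmap : ℝ × ℝ → E2 := fun p =>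
  (MeasurableEquiv.toLp 2 (Fin 2 → ℝ)) ((MeasurableEquiv.finTwoArrow (α := ℝ)).symm p)

lemma measurePreserving_Fmap : MeasurePreserving Fmap volume volume :=
  ((EuclideanSpace.volume_preserving_symm_measurableEquiv_toLp (Fin 2)).symm).comp
    ((volume_preserving_finTwoArrow ℝ).symm _)

lemma Fmap_zero (s t : ℝ) : Fmap (s, t) 0 = s := rfl
lemma Fmap_one (s t : ℝ) : Fmap (s, t) 1 = t := rfl

lemma Fmap_vert (s t : ℝ) :
    Fmap (s, t) = Fmap (s, 0) + t • EuclideanSpace.single (1 : Fin 2) (1 : ℝ) := by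
  ext i
  fin_cases i <;>
    simp [Fmap_zero, Fmap_one, PiLp.add_apply, PiLp.smul_apply, EuclideanSpace.single_apply]

lemma Fmap_horiz (s t : ℝ) :
    Fmap (s, t) = Fmap (0, t) + s • EuclideanSpace.single (0 : Fin 2) (1 : ℝ) := by
  ext i
  fin_cases i <;>
    simp [Fmap_zero, Fmap_one, PiLp.add_apply, PiLp.smul_apply, EuclideanSpace.single_apply]


/-- The key 2D measure estimate: the part of a unit square where `|u - 1| < ε`
has measure at most `48 √(ε/κ)`. -/
lemma measure_level {u : E2 → ℝ} (hu : ContDiff ℝ (⊤ : ℕ∞) u) (hcvx : ConvexOn ℝ univ u)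
    {κ : ℝ} (hκ : 0 < κ)
    (hlap : ∀ y, κ * u y ≤ D2 u y (EuclideanSpace.single (0 : Fin 2) (1 : ℝ))
      + D2 u y (EuclideanSpace.single (1 : Fin 2) (1 : ℝ)))
    (c : E2) {ε : ℝ} (hε : 0 < ε) (hε2 : ε ≤ 1 / 2) :
    volume ({y : E2 | ∀ i, y i ∈ Icc (c i) (c i + 1)} ∩ {y | |u y - 1| < ε})
      ≤ ENNReal.ofReal (48 * Real.sqrt (ε / κ)) := by
  classical
  set e0 : E2 := EuclideanSpace.single (0 : Fin 2) (1 : ℝ) with he0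
  set e1 : E2 := EuclideanSpace.single (1 : Fin 2) (1 : ℝ) with he1
  set a : ℝ := κ / 4 with hadef
  have ha : 0 < a := by positivity
  have hucont : Continuous u := hu.continuous
  set Q : Set E2 := {y | ∀ i, y i ∈ Icc (c i) (c i + 1)} with hQdef
  have hQm : MeasurableSet Q := by
    have : Q = ⋂ i, (fun y : E2 => y i) ⁻¹' Icc (c i) (c i + 1) := by
      ext y
      simp [hQdef]
    rw [this]
    exact MeasurableSet.iInter fun i =>
      (measurableSet_Icc).preimage (EuclideanSpace.proj i).continuous.measurable
  have hSm : MeasurableSet {y : E2 | |u y - 1| < ε} :=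
    measurableSet_lt ((hucont.sub continuous_const).abs).measurable measurable_const
  set V0 : Set E2 := Q ∩ {y | |u y - 1| < ε} ∩ {y | a ≤ D2 u y e0} with hV0def
  set V1 : Set E2 := Q ∩ {y | |u y - 1| < ε} ∩ {y | a ≤ D2 u y e1} with hV1def
  have hV0m : MeasurableSet V0 :=
    (hQm.inter hSm).inter
      (measurableSet_le measurable_const (continuous_D2 hu e0).measurable)
  have hV1m : MeasurableSet V1 :=
    (hQm.inter hSm).inter
      (measurableSet_le measurable_const (continuous_D2 hu e1).measurable)
  -- covering
  have hcover : Q ∩ {y | |u y - 1| < ε} ⊆ V0 ∪ V1 := by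
    intro y hy
    have hy2 := hy.2
    simp only [mem_setOf_eq] at hy2
    rw [abs_lt] at hy2
    have huy : 1 / 2 ≤ u y := by linarith [hy2.1]
    have hsum : κ / 2 ≤ D2 u y e0 + D2 u y e1 := by
      have h1 := hlap y
      nlinarith [hlap y]
    by_contra hcon
    simp only [mem_union, mem_inter_iff, not_or, not_and_or] at hcon
    have h0 : ¬ a ≤ D2 u y e0 := by tauto
    have h1 : ¬ a ≤ D2 u y e1 := by tauto
    push_neg at h0 h1
    rw [hadef] at h0 h1
    linarith
  -- per-direction bounds
  have sqrt_bd : Real.sqrt (ε / a) = 2 * Real.sqrt (ε / κ) := by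
    rw [hadef, show ε / (κ / 4) = 4 * (ε / κ) by field_simp,
      Real.sqrt_mul (by norm_num : (0:ℝ) ≤ 4),
      show Real.sqrt 4 = 2 by
        rw [show (4:ℝ) = 2 ^ 2 by norm_num, Real.sqrt_sq (by norm_num : (0:ℝ) ≤ 2)]]
  -- bound for V1 (vertical slices)
  have hV1 : volume V1 ≤ ENNReal.ofReal (12 * Real.sqrt (ε / a)) := by
    have h0 : volume (Fmap ⁻¹' V1) = volume V1 :=
      measurePreserving_Fmap.measure_preimage hV1m.nullMeasurableSet
    have hpm : MeasurableSet (Fmap ⁻¹' V1) :=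
      hV1m.preimage measurePreserving_Fmap.measurable
    rw [← h0, Measure.volume_eq_prod, Measure.prod_apply hpm]
    have hbound : ∀ s : ℝ, volume (Prod.mk s ⁻¹' (Fmap ⁻¹' V1))
        ≤ (Icc (c 0) (c 0 + 1)).indicator
            (fun _ => ENNReal.ofReal (12 * Real.sqrt (ε / a))) s := by
      intro s
      by_cases hs : s ∈ Icc (c 0) (c 0 + 1)
      · rw [indicator_of_mem hs]
        set g : ℝ → ℝ := fun t => u (Fmap (s, 0) + t • e1) with hgdef
        have hsub : Prod.mk s ⁻¹' (Fmap ⁻¹' V1)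
            ⊆ {t | t ∈ Icc (c 1) (c 1 + 1) ∧ a ≤ deriv (deriv g) t ∧ |g t - 1| < ε} := by
          intro t ht
          simp only [mem_preimage, hV1def, mem_inter_iff, mem_setOf_eq] at ht
          have hcoord : Fmap (s, t) 1 = t := Fmap_one s t
          have hvert := Fmap_vert s t
          refine ⟨?_, ?_, ?_⟩
          · have := ht.1.1 1
            rwa [hcoord] at this
          · rw [deriv2_line hu]
            rw [← hvert]
            exact ht.2
          · rw [hgdef]
            simp only []
            rw [← hvert]
            exact ht.1.2
        calc volume (Prod.mk s ⁻¹' (Fmap ⁻¹' V1))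
            ≤ volume {t | t ∈ Icc (c 1) (c 1 + 1) ∧ a ≤ deriv (deriv g) t ∧ |g t - 1| < ε} :=
              measure_mono hsub
          _ ≤ ENNReal.ofReal (12 * Real.sqrt (ε / a)) :=
              line1D (contDiff_slice hu _ e1) (convexOn_slice hcvx _ e1) (c 1) ha hε
      · rw [indicator_of_notMem hs]
        convert (zero_le : (0 : ENNReal) ≤ _)
        rw [← measure_empty (μ := (volume : Measure ℝ))]
        congr 1
        ext t
        simp only [mem_preimage, hV1def, mem_inter_iff, mem_setOf_eq, mem_empty_iff_false,
          iff_false]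
        intro ht
        exact hs (by simpa [Fmap_zero] using ht.1.1 0)
    calc ∫⁻ s, volume (Prod.mk s ⁻¹' (Fmap ⁻¹' V1)) ∂volume
        ≤ ∫⁻ s, (Icc (c 0) (c 0 + 1)).indicator
            (fun _ => ENNReal.ofReal (12 * Real.sqrt (ε / a))) s ∂volume :=
          lintegral_mono hbound
      _ = ENNReal.ofReal (12 * Real.sqrt (ε / a)) * volume (Icc (c 0) (c 0 + 1)) := by
          rw [lintegral_indicator measurableSet_Icc, setLIntegral_const]
      _ = ENNReal.ofReal (12 * Real.sqrt (ε / a)) := by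
          rw [Real.volume_Icc]
          norm_num
  -- bound for V0 (horizontal slices)
  have hV0 : volume V0 ≤ ENNReal.ofReal (12 * Real.sqrt (ε / a)) := by
    have h0 : volume (Fmap ⁻¹' V0) = volume V0 :=
      measurePreserving_Fmap.measure_preimage hV0m.nullMeasurableSet
    have hpm : MeasurableSet (Fmap ⁻¹' V0) :=
      hV0m.preimage measurePreserving_Fmap.measurable
    rw [← h0, Measure.volume_eq_prod, Measure.prod_apply_symm hpm]
    have hbound : ∀ t : ℝ, volume ((fun x => (x, t)) ⁻¹' (Fmap ⁻¹' V0))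
        ≤ (Icc (c 1) (c 1 + 1)).indicator
            (fun _ => ENNReal.ofReal (12 * Real.sqrt (ε / a))) t := by
      intro t
      by_cases hs : t ∈ Icc (c 1) (c 1 + 1)
      · rw [indicator_of_mem hs]
        set g : ℝ → ℝ := fun x => u (Fmap (0, t) + x • e0) with hgdef
        have hsub : (fun x => (x, t)) ⁻¹' (Fmap ⁻¹' V0)
            ⊆ {x | x ∈ Icc (c 0) (c 0 + 1) ∧ a ≤ deriv (deriv g) x ∧ |g x - 1| < ε} := by
          intro x ht
          simp only [mem_preimage, hV0def, mem_inter_iff, mem_setOf_eq] at ht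
          have hcoord : Fmap (x, t) 0 = x := Fmap_zero x t
          have hhoriz := Fmap_horiz x t
          refine ⟨?_, ?_, ?_⟩
          · have := ht.1.1 0
            rwa [hcoord] at this
          · rw [deriv2_line hu]
            rw [← hhoriz]
            exact ht.2
          · rw [hgdef]
            simp only []
            rw [← hhoriz]
            exact ht.1.2
        calc volume ((fun x => (x, t)) ⁻¹' (Fmap ⁻¹' V0))
            ≤ volume {x | x ∈ Icc (c 0) (c 0 + 1) ∧ a ≤ deriv (deriv g) x ∧ |g x - 1| < ε} :=
              measure_mono hsub
          _ ≤ ENNReal.ofReal (12 * Real.sqrt (ε / a)) :=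
              line1D (contDiff_slice hu _ e0) (convexOn_slice hcvx _ e0) (c 0) ha hε
      · rw [indicator_of_notMem hs]
        convert (zero_le : (0 : ENNReal) ≤ _)
        rw [← measure_empty (μ := (volume : Measure ℝ))]
        congr 1
        ext x
        simp only [mem_preimage, hV0def, mem_inter_iff, mem_setOf_eq, mem_empty_iff_false,
          iff_false]
        intro ht
        exact hs (by simpa [Fmap_one] using ht.1.1 1)
    calc ∫⁻ t, volume ((fun x => (x, t)) ⁻¹' (Fmap ⁻¹' V0)) ∂volume
        ≤ ∫⁻ t, (Icc (c 1) (c 1 + 1)).indicator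
            (fun _ => ENNReal.ofReal (12 * Real.sqrt (ε / a))) t ∂volume :=
          lintegral_mono hbound
      _ = ENNReal.ofReal (12 * Real.sqrt (ε / a)) * volume (Icc (c 1) (c 1 + 1)) := by
          rw [lintegral_indicator measurableSet_Icc, setLIntegral_const]
      _ = ENNReal.ofReal (12 * Real.sqrt (ε / a)) := by
          rw [Real.volume_Icc]
          norm_num
  calc volume (Q ∩ {y | |u y - 1| < ε}) ≤ volume (V0 ∪ V1) := measure_mono hcover
    _ ≤ volume V0 + volume V1 := measure_union_le _ _
    _ ≤ ENNReal.ofReal (12 * Real.sqrt (ε / a)) + ENNReal.ofReal (12 * Real.sqrt (ε / a)) :=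
        add_le_add hV0 hV1
    _ ≤ ENNReal.ofReal (48 * Real.sqrt (ε / κ)) := by
        rw [← ENNReal.ofReal_add (by positivity) (by positivity)]
        apply ENNReal.ofReal_le_ofReal
        rw [sqrt_bd]
        ring_nf
        exact le_refl _

end Stmt14Aux

end

noncomputable section

open Stmt14Aux in
lemma lap2_eq_D2 {u : E2 → ℝ} (hu : ContDiff ℝ (⊤ : ℕ∞) u) (y : E2) :
    lap2 u y = D2 u y (EuclideanSpace.single (0 : Fin 2) (1 : ℝ))
      + D2 u y (EuclideanSpace.single (1 : Fin 2) (1 : ℝ)) := by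
  unfold lap2
  rw [iteratedDeriv_two_line hu, iteratedDeriv_two_line hu]

open Stmt14Aux in
/-- There is a constant c₀, depending only on κ, such that for every positive, smooth,
convex u on ℝ² with Δu ≥ κu and |∇u| ≤ Ku, the integral of log(1 + 4u/(u-1)²) over any
unit square is at most c₀. -/
theorem stmt14 (κ K : ℝ) (hκ : 0 < κ) (hK : 0 < K) :
    ∃ c₀ : ℝ, ∀ (u : EuclideanSpace ℝ (Fin 2) → ℝ),
      (∀ y, 0 < u y) → ContDiff ℝ (⊤ : ℕ∞) u → ConvexOn ℝ Set.univ u →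
      (∀ y, κ * u y ≤ lap2 u y) → (∀ y, ‖gradient u y‖ ≤ K * u y) →
      ∀ c : EuclideanSpace ℝ (Fin 2),
        ∫ y in {y : EuclideanSpace ℝ (Fin 2) | ∀ i, y i ∈ Set.Icc (c i) (c i + 1)},
          Real.log (1 + 4 * u y / (u y - 1) ^ 2) ≤ c₀ := by
  classical
  refine ⟨24 + 4800 / Real.sqrt κ, ?_⟩
  intro u hpos hsm hconv hlap hgrad c
  have hu : ContDiff ℝ (⊤ : ℕ∞) u := hsm.of_le (by simp)
  have hucont : Continuous u := hu.continuous
  have habs : Continuous fun y : E2 => |u y - 1| := (hucont.sub continuous_const).abs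
  have hlapD2 : ∀ y, κ * u y ≤ D2 u y (EuclideanSpace.single (0 : Fin 2) (1 : ℝ))
      + D2 u y (EuclideanSpace.single (1 : Fin 2) (1 : ℝ)) := by
    intro y
    rw [← lap2_eq_D2 hu y]
    exact hlap y
  set Q : Set E2 := {y | ∀ i, y i ∈ Icc (c i) (c i + 1)} with hQdef
  have hQm : MeasurableSet Q := by
    have hQeq : Q = ⋂ i, (fun y : E2 => y i) ⁻¹' Icc (c i) (c i + 1) := by
      ext y
      simp [hQdef]
    rw [hQeq]
    exact MeasurableSet.iInter fun i =>
      measurableSet_Icc.preimage (EuclideanSpace.proj i).continuous.measurable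
  have volQ : volume Q = 1 := by
    have h0 : volume (Fmap ⁻¹' Q) = volume Q :=
      measurePreserving_Fmap.measure_preimage hQm.nullMeasurableSet
    have heq : Fmap ⁻¹' Q = (Icc (c 0) (c 0 + 1)) ×ˢ (Icc (c 1) (c 1 + 1)) := by
      ext p
      obtain ⟨s, t⟩ := p
      simp only [mem_preimage, hQdef, mem_setOf_eq, mem_prod]
      constructor
      · intro h
        exact ⟨by simpa [Fmap_zero] using h 0, by simpa [Fmap_one] using h 1⟩
      · intro h i
        fin_cases i
        · simpa [Fmap_zero] using h.1
        · simpa [Fmap_one] using h.2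
    rw [← h0, heq, Measure.volume_eq_prod, Measure.prod_prod, Real.volume_Icc, Real.volume_Icc]
    norm_num
  set f : E2 → ℝ := fun y => Real.log (1 + 4 * u y / (u y - 1) ^ 2) with hfdef
  have hf0 : ∀ y, 0 ≤ f y := by
    intro y
    apply Real.log_nonneg
    have h1 : 0 ≤ 4 * u y / (u y - 1) ^ 2 := div_nonneg (by nlinarith [hpos y]) (sq_nonneg _)
    linarith
  have hfm : Measurable f := by
    have m1 : Measurable fun y : E2 => 1 + 4 * u y / (u y - 1) ^ 2 :=
      measurable_const.add ((hucont.measurable.const_mul 4).div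
        (((hucont.sub continuous_const).measurable).pow_const 2))
    exact Real.measurable_log.comp m1
  rw [MeasureTheory.integral_eq_lintegral_of_nonneg_ae
    (Filter.Eventually.of_forall hf0) hfm.aestronglyMeasurable]
  have hc0 : (0 : ℝ) ≤ 24 + 4800 / Real.sqrt κ := by positivity
  refine ENNReal.toReal_le_of_le_ofReal hc0 ?_
  -- decomposition of the square
  set A : Set E2 := {y | 1 / 2 ≤ |u y - 1|} with hAdef
  set Z : Set E2 := {y | u y = 1} with hZdef
  set Ek : ℕ → Set E2 :=
    fun k => {y | (1 / 2 : ℝ) ^ (k + 2) ≤ |u y - 1| ∧ |u y - 1| < (1 / 2 : ℝ) ^ (k + 1)}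
    with hEkdef
  have hAm : MeasurableSet A := measurableSet_le measurable_const habs.measurable
  have hZm : MeasurableSet Z := (isClosed_eq hucont continuous_const).measurableSet
  have hEm : ∀ k, MeasurableSet (Ek k) := fun k =>
    (measurableSet_le measurable_const habs.measurable).inter
      (measurableSet_lt habs.measurable measurable_const)
  have hcover : Q ⊆ (Q ∩ A) ∪ ((⋃ k, Q ∩ Ek k) ∪ (Q ∩ Z)) := by
    intro y hy
    rcases le_or_gt (1 / 2 : ℝ) (|u y - 1|) with h | h
    · exact Or.inl ⟨hy, h⟩
    rcases eq_or_ne (u y) 1 with h1 | h1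
    · exact Or.inr (Or.inr ⟨hy, h1⟩)
    · have hs : 0 < |u y - 1| := abs_pos.2 (sub_ne_zero.2 h1)
      obtain ⟨n, hn⟩ := exists_pow_lt_of_lt_one hs (by norm_num : (1 / 2 : ℝ) < 1)
      have hP : ∃ m : ℕ, (1 / 2 : ℝ) ^ (m + 2) ≤ |u y - 1| :=
        ⟨n, le_trans (pow_le_pow_of_le_one (by norm_num) (by norm_num) (by omega)) hn.le⟩
      have hk1 : (1 / 2 : ℝ) ^ (Nat.find hP + 2) ≤ |u y - 1| := Nat.find_spec hP
      have hk2 : |u y - 1| < (1 / 2 : ℝ) ^ (Nat.find hP + 1) := by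
        rcases Nat.eq_zero_or_pos (Nat.find hP) with hk0 | hk0
        · rw [hk0]
          simpa using h
        · obtain ⟨m, hm⟩ := Nat.exists_eq_succ_of_ne_zero hk0.ne'
          have hmin := Nat.find_min hP (m := m) (by omega)
          push_neg at hmin
          rw [hm]
          have : m + 1 + 1 = m + 2 := by omega
          rw [this]
          exact hmin
      exact Or.inr (Or.inl (mem_iUnion.2 ⟨Nat.find hP, hy, hk1, hk2⟩))
  -- bound on A
  have hA_bound : ∫⁻ y in Q ∩ A, ENNReal.ofReal (f y) ≤ ENNReal.ofReal 24 := by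
    have hpt : ∀ y ∈ Q ∩ A, ENNReal.ofReal (f y) ≤ ENNReal.ofReal 24 := by
      intro y hy
      apply ENNReal.ofReal_le_ofReal
      have hA2 : 1 / 2 ≤ |u y - 1| := hy.2
      have hune : u y - 1 ≠ 0 := by
        intro h0
        rw [h0, abs_zero] at hA2
        norm_num at hA2
      have hsq : 0 < (u y - 1) ^ 2 := by positivity
      have hdiv : 0 ≤ 4 * u y / (u y - 1) ^ 2 := div_nonneg (by nlinarith [hpos y]) (sq_nonneg _)
      have harg : 0 < 1 + 4 * u y / (u y - 1) ^ 2 := by linarith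
      have h24 : 4 * u y / (u y - 1) ^ 2 ≤ 24 := by
        rw [div_le_iff₀ hsq]
        rcases le_or_gt (u y) 1 with hle | hlt
        · have hhalf : u y ≤ 1 / 2 := by
            rw [abs_of_nonpos (by linarith)] at hA2
            linarith
          nlinarith [hpos y]
        · have h32 : 3 / 2 ≤ u y := by
            rw [abs_of_pos (by linarith)] at hA2
            linarith
          nlinarith
      calc f y ≤ 1 + 4 * u y / (u y - 1) ^ 2 - 1 := Real.log_le_sub_one_of_pos harg
        _ ≤ 24 := by linarith
    calc ∫⁻ y in Q ∩ A, ENNReal.ofReal (f y)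
        ≤ ∫⁻ _ in Q ∩ A, ENNReal.ofReal 24 := setLIntegral_mono measurable_const hpt
      _ = ENNReal.ofReal 24 * volume (Q ∩ A) := setLIntegral_const _ _
      _ ≤ ENNReal.ofReal 24 * 1 := by
          gcongr
          rw [← volQ]
          exact measure_mono inter_subset_left
      _ = ENNReal.ofReal 24 := mul_one _
  -- bound on Z
  have hZ_bound : ∫⁻ y in Q ∩ Z, ENNReal.ofReal (f y) = 0 := by
    have h0 : ∀ y, y ∈ Q ∩ Z → ENNReal.ofReal (f y) = (fun _ : E2 => (0 : ENNReal)) y := by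
      intro y hy
      have h1 : u y = 1 := hy.2
      simp [hfdef, h1]
    rw [setLIntegral_congr_fun (hQm.inter hZm) h0, lintegral_zero]
  -- bound on each Ek
  have hEk_bound : ∀ k : ℕ, ∫⁻ y in Q ∩ Ek k, ENNReal.ofReal (f y)
      ≤ ENNReal.ofReal (480 / Real.sqrt κ * (((k : ℝ) + 1) * Real.sqrt (1 / 2) ^ (k + 1))) := by
    intro k
    have hεk : (0 : ℝ) < (1 / 2) ^ (k + 1) := by positivity
    have hεk2 : ((1 / 2 : ℝ)) ^ (k + 1) ≤ 1 / 2 := by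
      calc ((1 / 2 : ℝ)) ^ (k + 1) ≤ (1 / 2) ^ 1 :=
            pow_le_pow_of_le_one (by norm_num) (by norm_num) (by omega)
        _ = 1 / 2 := pow_one _
    have hpt : ∀ y ∈ Q ∩ Ek k, ENNReal.ofReal (f y)
        ≤ ENNReal.ofReal (10 * ((k : ℝ) + 1)) := by
      intro y hy
      apply ENNReal.ofReal_le_ofReal
      obtain ⟨hy1, hy2⟩ := hy.2
      have hs0 : (0 : ℝ) < (1 / 2) ^ (k + 2) := by positivity
      have hspos : 0 < |u y - 1| := lt_of_lt_of_le hs0 hy1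
      have hune : u y - 1 ≠ 0 := by
        intro h0
        rw [h0, abs_zero] at hspos
        exact lt_irrefl 0 hspos
      have hsq : 0 < (u y - 1) ^ 2 := by positivity
      have hlt : |u y - 1| < 1 / 2 := lt_of_lt_of_le hy2 hεk2
      have hub : u y ≤ 3 / 2 := by
        have := abs_lt.1 hlt
        linarith [this.2]
      have hs1 : (u y - 1) ^ 2 ≤ 1 := by
        have h1 := abs_lt.1 hlt
        nlinarith [h1.1, h1.2]
      have hdiv : 0 ≤ 4 * u y / (u y - 1) ^ 2 := div_nonneg (by nlinarith [hpos y]) (sq_nonneg _)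
      have harg0 : 0 < 1 + 4 * u y / (u y - 1) ^ 2 := by linarith
      have harg : 1 + 4 * u y / (u y - 1) ^ 2 ≤ 7 / (u y - 1) ^ 2 := by
        rw [le_div_iff₀ hsq]
        have hexp : (1 + 4 * u y / (u y - 1) ^ 2) * (u y - 1) ^ 2
            = (u y - 1) ^ 2 + 4 * u y := by
          field_simp
        rw [hexp]
        nlinarith [hpos y]
      have hlog : f y ≤ Real.log (7 / (u y - 1) ^ 2) := by
        rw [hfdef]
        exact (Real.log_le_log_iff harg0 (by positivity)).2 harg
      have hlog2 : Real.log (7 / (u y - 1) ^ 2) = Real.log 7 - 2 * Real.log |u y - 1| := by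
        rw [Real.log_div (by norm_num) hsq.ne', Real.log_pow]
        rw [← Real.log_abs (u y - 1)]
        push_cast
        ring
      have hlogs : -Real.log |u y - 1| ≤ ((k : ℝ) + 2) * Real.log 2 := by
        have h1 : Real.log ((1 / 2 : ℝ) ^ (k + 2)) ≤ Real.log |u y - 1| :=
          (Real.log_le_log_iff hs0 hspos).2 hy1
        rw [Real.log_pow, one_div, Real.log_inv] at h1
        push_cast at h1 ⊢
        linarith
      have hlog7 : Real.log 7 ≤ 6 := by
        linarith [Real.log_le_sub_one_of_pos (by norm_num : (0 : ℝ) < 7)]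
      have hlog2' : Real.log 2 ≤ 1 := by
        linarith [Real.log_le_sub_one_of_pos (by norm_num : (0 : ℝ) < 2)]
      have hl2pos : 0 ≤ Real.log 2 := Real.log_nonneg (by norm_num)
      have hstep : f y ≤ Real.log 7 + 2 * (((k : ℝ) + 2) * Real.log 2) := by
        rw [hlog2] at hlog
        linarith
      have hk2l : ((k : ℝ) + 2) * Real.log 2 ≤ (k : ℝ) + 2 := by
        have hk0 : (0 : ℝ) ≤ (k : ℝ) + 2 := by positivity
        nlinarith
      have : (0:ℝ) ≤ (k : ℝ) := Nat.cast_nonneg k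
      linarith
    have hmeas : volume (Q ∩ Ek k)
        ≤ ENNReal.ofReal (48 * Real.sqrt ((1 / 2) ^ (k + 1) / κ)) := by
      refine le_trans (measure_mono ?_) (measure_level hu hconv hκ hlapD2 c hεk hεk2)
      intro y hy
      exact ⟨hy.1, hy.2.2⟩
    calc ∫⁻ y in Q ∩ Ek k, ENNReal.ofReal (f y)
        ≤ ∫⁻ _ in Q ∩ Ek k, ENNReal.ofReal (10 * ((k : ℝ) + 1)) :=
          setLIntegral_mono measurable_const hpt
      _ = ENNReal.ofReal (10 * ((k : ℝ) + 1)) * volume (Q ∩ Ek k) := setLIntegral_const _ _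
      _ ≤ ENNReal.ofReal (10 * ((k : ℝ) + 1))
            * ENNReal.ofReal (48 * Real.sqrt ((1 / 2) ^ (k + 1) / κ)) := by gcongr
      _ ≤ ENNReal.ofReal (480 / Real.sqrt κ * (((k : ℝ) + 1) * Real.sqrt (1 / 2) ^ (k + 1))) := by
          rw [← ENNReal.ofReal_mul (by positivity)]
          apply ENNReal.ofReal_le_ofReal
          rw [Real.sqrt_div (by positivity : (0:ℝ) ≤ (1/2)^(k+1)) κ]
          have hsqq : Real.sqrt ((1 / 2 : ℝ) ^ (k + 1)) = Real.sqrt (1 / 2) ^ (k + 1) := by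
            rw [show ((1 / 2 : ℝ)) ^ (k + 1) = (Real.sqrt (1 / 2) ^ (k + 1)) ^ 2 by
                rw [← pow_mul, mul_comm (k + 1) 2, pow_mul,
                  Real.sq_sqrt (by norm_num : (0 : ℝ) ≤ 1 / 2)],
              Real.sqrt_sq (by positivity)]
          rw [hsqq]
          apply le_of_eq
          ring
  -- the sum over k
  have hsum : ∑' k, ∫⁻ y in Q ∩ Ek k, ENNReal.ofReal (f y)
      ≤ ENNReal.ofReal (4800 / Real.sqrt κ) := by
    have hx0 : (0 : ℝ) ≤ Real.sqrt (1 / 2) := Real.sqrt_nonneg _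
    have hx2 : Real.sqrt (1 / 2) ^ 2 = 1 / 2 := Real.sq_sqrt (by norm_num)
    have hx71 : Real.sqrt (1 / 2) ≤ 0.71 := by nlinarith
    have hx1 : Real.sqrt (1 / 2) < 1 := by nlinarith
    have hxnorm : ‖Real.sqrt (1 / 2)‖ < 1 := by
      rw [Real.norm_eq_abs, abs_of_nonneg hx0]
      exact hx1
    have hsumm0 : Summable fun k : ℕ => (k : ℝ) * Real.sqrt (1 / 2) ^ k := by
      have := summable_pow_mul_geometric_of_norm_lt_one 1 hxnorm
      simpa using this
    have hsumm1 : Summable fun k : ℕ => ((k : ℝ) + 1) * Real.sqrt (1 / 2) ^ (k + 1) := by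
      have h2 := (summable_nat_add_iff 1).2 hsumm0
      refine h2.congr fun k => ?_
      push_cast
      ring
    have hgeom : ∑' k : ℕ, (k : ℝ) * Real.sqrt (1 / 2) ^ k
        = Real.sqrt (1 / 2) / (1 - Real.sqrt (1 / 2)) ^ 2 :=
      tsum_coe_mul_geometric_of_norm_lt_one hxnorm
    have hshift : ∑' k : ℕ, ((k : ℝ) + 1) * Real.sqrt (1 / 2) ^ (k + 1)
        = Real.sqrt (1 / 2) / (1 - Real.sqrt (1 / 2)) ^ 2 := by
      rw [← hgeom, hsumm0.tsum_eq_zero_add]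
      push_cast
      simp
    have hbound : Real.sqrt (1 / 2) / (1 - Real.sqrt (1 / 2)) ^ 2 ≤ 10 := by
      rw [div_le_iff₀ (by nlinarith)]
      nlinarith
    calc ∑' k, ∫⁻ y in Q ∩ Ek k, ENNReal.ofReal (f y)
        ≤ ∑' (k : ℕ), ENNReal.ofReal
            (480 / Real.sqrt κ * (((k : ℝ) + 1) * Real.sqrt (1 / 2) ^ (k + 1))) :=
          ENNReal.tsum_le_tsum fun k => hEk_bound k
      _ = ENNReal.ofReal (∑' k : ℕ,
            480 / Real.sqrt κ * (((k : ℝ) + 1) * Real.sqrt (1 / 2) ^ (k + 1))) :=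
          (ENNReal.ofReal_tsum_of_nonneg (fun k => by positivity) (hsumm1.mul_left _)).symm
      _ ≤ ENNReal.ofReal (4800 / Real.sqrt κ) := by
          apply ENNReal.ofReal_le_ofReal
          rw [tsum_mul_left, hshift]
          calc 480 / Real.sqrt κ * (Real.sqrt (1 / 2) / (1 - Real.sqrt (1 / 2)) ^ 2)
              ≤ 480 / Real.sqrt κ * 10 :=
                mul_le_mul_of_nonneg_left hbound (by positivity)
            _ = 4800 / Real.sqrt κ := by ring
  -- put the three pieces together
  calc ∫⁻ y in Q, ENNReal.ofReal (f y)
      ≤ ∫⁻ y in (Q ∩ A) ∪ ((⋃ k, Q ∩ Ek k) ∪ (Q ∩ Z)), ENNReal.ofReal (f y) :=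
        lintegral_mono_set hcover
    _ ≤ (∫⁻ y in Q ∩ A, ENNReal.ofReal (f y))
        + (∫⁻ y in (⋃ k, Q ∩ Ek k) ∪ (Q ∩ Z), ENNReal.ofReal (f y)) :=
        lintegral_union_le _ _ _
    _ ≤ (∫⁻ y in Q ∩ A, ENNReal.ofReal (f y))
        + ((∫⁻ y in ⋃ k, Q ∩ Ek k, ENNReal.ofReal (f y))
          + (∫⁻ y in Q ∩ Z, ENNReal.ofReal (f y))) :=
        add_le_add le_rfl (lintegral_union_le _ _ _)
    _ ≤ ENNReal.ofReal 24 + (ENNReal.ofReal (4800 / Real.sqrt κ) + 0) :=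
        add_le_add hA_bound
          (add_le_add (le_trans (lintegral_iUnion_le _ _) hsum) (le_of_eq hZ_bound))
    _ = ENNReal.ofReal 24 + ENNReal.ofReal (4800 / Real.sqrt κ) := by rw [add_zero]
    _ ≤ ENNReal.ofReal (24 + 4800 / Real.sqrt κ) := by
        rw [ENNReal.ofReal_add (by norm_num) (by positivity)]

end
end
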